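/- arXiv:2504.17294 — 12 statements merged into one kernel-verified Lean document; each statement's English description precedes it below -/
import Mathlib

section
/- Let n ≥ 3 be an integer and let I ⊆ ℝ be a nonempty open interval with I ∩ {−1, 0, 1} = ∅. Let Ω = {(X₀, X₁) ∈ ℝ² : X₁ ∈ I and X₀ > X₁²}, and let F, G : Ω → ℝ be continuously differentiable. Suppose that at every point of Ω the following four equations hold (subscripts denoting partial derivatives): (i) (n−1)G + (X₀−X₁²)(X₁ F_{X₀} − G_{X₀}) = 0; (ii) nF − X₁ F_{X₁} + G_{X₁} − X₀ F_{X₀} + (X₀/X₁) G_{X₀} = 0; (iii) (1−n)X₁ G + (X₀−X₁²)(X₁ G_{X₀} − F_{X₀}) = 0; (iv) F_{X₁} − (n−2)G − X₁ G_{X₁} + (X₀/X₁) F_{X₀} − X₀ G_{X₀} = 0. Then F = 0 and G = 0 identically on Ω. -/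
/-- Partial derivative in the `X₀` (first-coordinate) direction. -/
noncomputable def pd0 (h : ℝ × ℝ → ℝ) (p : ℝ × ℝ) : ℝ := fderiv ℝ h p (1, 0)

/-- Partial derivative in the `X₁` (second-coordinate) direction. -/
noncomputable def pd1 (h : ℝ × ℝ → ℝ) (p : ℝ × ℝ) : ℝ := fderiv ℝ h p (0, 1)

/-!
Adding `X₁ ·` (i) to (iii) leaves `(X₀ - X₁²)(X₁² - 1) F_{X₀} = 0`, so `F_{X₀} = 0`. Then
`X₁ ·` (ii) + (iv) gives `(n - 2) G = n X₁ F + (1 - X₁²) F_{X₁}`. The horizontal sections of `Ω`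
are rays, so `F`, and with it `F_{X₁}`, depends on `X₁` alone; hence so does `G`, and (i) reduces
to `(n - 1) G = 0`. With `G = 0`, (iv) gives `F_{X₁} = 0` and (ii) gives `n F = 0`.
-/

open Filter Topology Set

section PartialDerivatives

variable {h : ℝ × ℝ → ℝ}

theorem DifferentiableAt.hasDerivAt_pd0 {p : ℝ × ℝ} (hd : DifferentiableAt ℝ h p) :
    HasDerivAt (fun t => h (t, p.2)) (pd0 h p) p.1 :=
  hd.hasFDerivAt.comp_hasDerivAt_of_eq p.1
    ((hasDerivAt_id _).prodMk (hasDerivAt_const _ _)) rfl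

theorem DifferentiableAt.hasDerivAt_pd1 {p : ℝ × ℝ} (hd : DifferentiableAt ℝ h p) :
    HasDerivAt (fun t => h (p.1, t)) (pd1 h p) p.2 :=
  hd.hasFDerivAt.comp_hasDerivAt_of_eq p.2
    ((hasDerivAt_const _ _).prodMk (hasDerivAt_id _)) rfl

theorem pd1_eq_zero_of_eventuallyEq_zero {p : ℝ × ℝ} (hh : h =ᶠ[𝓝 p] 0) : pd1 h p = 0 := by
  simp [pd1, hh.fderiv_eq]

variable {U : Set (ℝ × ℝ)} (hU : IsOpen U) (hrows : ∀ y, IsPreconnected {t | (t, y) ∈ U})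
include hU

theorem isOpen_row (y : ℝ) : IsOpen {t | (t, y) ∈ U} :=
  hU.preimage (continuous_id.prodMk continuous_const)

theorem isOpen_column (x : ℝ) : IsOpen {t | (x, t) ∈ U} :=
  hU.preimage (continuous_const.prodMk continuous_id)

include hrows in
theorem eq_of_pd0_eq_zero (hd : ∀ p ∈ U, DifferentiableAt ℝ h p) (h0 : ∀ p ∈ U, pd0 h p = 0)
    {a b y : ℝ} (ha : (a, y) ∈ U) (hb : (b, y) ∈ U) : h (a, y) = h (b, y) :=
  (isOpen_row hU y).is_const_of_deriv_eq_zero (hrows y)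
    (fun t ht => (hd _ ht).hasDerivAt_pd0.differentiableAt.differentiableWithinAt)
    (fun t ht => by simpa [h0 _ ht] using (hd _ ht).hasDerivAt_pd0.deriv) ha hb

include hrows in
theorem pd1_eq_of_pd0_eq_zero (hd : ∀ p ∈ U, DifferentiableAt ℝ h p)
    (h0 : ∀ p ∈ U, pd0 h p = 0) {a b y : ℝ} (ha : (a, y) ∈ U) (hb : (b, y) ∈ U) :
    pd1 h (a, y) = pd1 h (b, y) := by
  have hnear : ∀ᶠ t in 𝓝 y, (a, t) ∈ U ∧ (b, t) ∈ U :=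
    ((isOpen_column hU a).inter (isOpen_column hU b)).mem_nhds ⟨ha, hb⟩
  have hrow : (fun t => h (a, t)) =ᶠ[𝓝 y] fun t => h (b, t) :=
    hnear.mono fun t ht => eq_of_pd0_eq_zero hU hrows hd h0 ht.1 ht.2
  exact (hd _ ha).hasDerivAt_pd1.unique ((hd _ hb).hasDerivAt_pd1.congr_of_eventuallyEq hrow)

theorem pd0_eq_zero_of_eq_along_rows
    (hconst : ∀ a b y, (a, y) ∈ U → (b, y) ∈ U → h (a, y) = h (b, y))
    {p : ℝ × ℝ} (hp : p ∈ U) (hd : DifferentiableAt ℝ h p) : pd0 h p = 0 := by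
  have hrow : (fun t => h (t, p.2)) =ᶠ[𝓝 p.1] fun _ => h p :=
    eventually_of_mem ((isOpen_row hU p.2).mem_nhds hp) fun t ht => hconst t p.1 p.2 ht hp
  exact hd.hasDerivAt_pd0.unique ((hasDerivAt_const _ _).congr_of_eventuallyEq hrow)

end PartialDerivatives

theorem eq_zero_of_pde_i_iii {n x y g f₀ g₀ : ℝ} (hx : y ^ 2 < x) (hy : y ^ 2 ≠ 1)
    (h1 : (n - 1) * g + (x - y ^ 2) * (y * f₀ - g₀) = 0)
    (h3 : (1 - n) * y * g + (x - y ^ 2) * (y * g₀ - f₀) = 0) : f₀ = 0 := by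
  have : (x - y ^ 2) * (y ^ 2 - 1) * f₀ = 0 := by linear_combination y * h1 + h3
  simpa [sub_ne_zero.mpr hx.ne', sub_ne_zero.mpr hy] using this

theorem sub_two_mul_eq_of_pde_ii_iv {n x y f f₀ f₁ g g₀ g₁ : ℝ} (hy : y ≠ 0) (hf₀ : f₀ = 0)
    (h2 : n * f - y * f₁ + g₁ - x * f₀ + (x / y) * g₀ = 0)
    (h4 : f₁ - (n - 2) * g - y * g₁ + (x / y) * f₀ - x * g₀ = 0) :
    (n - 2) * g = n * y * f + (1 - y ^ 2) * f₁ := by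
  subst hf₀
  linear_combination (-y) * h2 - h4 + g₀ * div_mul_cancel₀ x hy

theorem eq_zero_of_pde_i {n x y g f₀ g₀ : ℝ} (hn : n ≠ 1) (hf₀ : f₀ = 0) (hg₀ : g₀ = 0)
    (h1 : (n - 1) * g + (x - y ^ 2) * (y * f₀ - g₀) = 0) : g = 0 := by
  subst hf₀ hg₀
  simpa [sub_ne_zero.mpr hn] using h1

theorem eq_zero_of_pde_ii_iv {n x y f f₀ f₁ g g₀ g₁ : ℝ} (hn : n ≠ 0) (hf₀ : f₀ = 0) (hg : g = 0)
    (hg₀ : g₀ = 0) (hg₁ : g₁ = 0) (h2 : n * f - y * f₁ + g₁ - x * f₀ + (x / y) * g₀ = 0)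
    (h4 : f₁ - (n - 2) * g - y * g₁ + (x / y) * f₀ - x * g₀ = 0) : f = 0 := by
  subst hf₀ hg hg₀ hg₁
  have hf₁ : f₁ = 0 := by linear_combination h4
  subst hf₁
  simpa [hn] using h2

section ParabolicRegion

def parabolicRegion (I : Set ℝ) : Set (ℝ × ℝ) := {p | p.2 ∈ I ∧ p.2 ^ 2 < p.1}

variable {I : Set ℝ}

theorem isOpen_parabolicRegion (hI : IsOpen I) : IsOpen (parabolicRegion I) :=
  (hI.preimage continuous_snd).inter (isOpen_lt (continuous_snd.pow 2) continuous_fst)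

theorem isPreconnected_parabolicRegion_row (y : ℝ) :
    IsPreconnected {t | (t, y) ∈ parabolicRegion I} := by
  by_cases hy : y ∈ I
  · convert isPreconnected_Ioi (a := y ^ 2) using 1
    ext t
    simp [parabolicRegion, hy]
  · convert isPreconnected_empty (α := ℝ) using 1
    ext t
    simp [parabolicRegion, hy]

theorem sq_ne_one_of_mem_parabolicRegion (hm1 : (-1 : ℝ) ∉ I) (h1 : (1 : ℝ) ∉ I) {p : ℝ × ℝ}
    (hp : p ∈ parabolicRegion I) : p.2 ^ 2 ≠ 1 := by
  rw [Ne, sq_eq_one_iff, not_or]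
  exact ⟨ne_of_mem_of_not_mem hp.1 h1, ne_of_mem_of_not_mem hp.1 hm1⟩

end ParabolicRegion

theorem stmt0_general (n : ℕ) (hn : 3 ≤ n)
    (I : Set ℝ) (hIopen : IsOpen I)
    (hIm1 : (-1 : ℝ) ∉ I) (hI0 : (0 : ℝ) ∉ I) (hI1 : (1 : ℝ) ∉ I)
    (Ω : Set (ℝ × ℝ)) (hΩ : Ω = {p : ℝ × ℝ | p.2 ∈ I ∧ p.2 ^ 2 < p.1})
    (F G : ℝ × ℝ → ℝ)
    (hF : ContDiffOn ℝ 1 F Ω) (hG : ContDiffOn ℝ 1 G Ω)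
    (heq1 : ∀ p ∈ Ω,
      ((n : ℝ) - 1) * G p + (p.1 - p.2 ^ 2) * (p.2 * pd0 F p - pd0 G p) = 0)
    (heq2 : ∀ p ∈ Ω,
      (n : ℝ) * F p - p.2 * pd1 F p + pd1 G p - p.1 * pd0 F p
        + (p.1 / p.2) * pd0 G p = 0)
    (heq3 : ∀ p ∈ Ω,
      (1 - (n : ℝ)) * p.2 * G p + (p.1 - p.2 ^ 2) * (p.2 * pd0 G p - pd0 F p) = 0)
    (heq4 : ∀ p ∈ Ω,
      pd1 F p - ((n : ℝ) - 2) * G p - p.2 * pd1 G p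
        + (p.1 / p.2) * pd0 F p - p.1 * pd0 G p = 0) :
    ∀ p ∈ Ω, F p = 0 ∧ G p = 0 := by
  obtain rfl : Ω = parabolicRegion I := hΩ
  have hΩo := isOpen_parabolicRegion hIopen
  have hn' : (3 : ℝ) ≤ n := by exact_mod_cast hn
  have hFd : ∀ p ∈ parabolicRegion I, DifferentiableAt ℝ F p := fun p hp =>
    (hF.differentiableOn one_ne_zero).differentiableAt (hΩo.mem_nhds hp)
  have hF0 : ∀ p ∈ parabolicRegion I, pd0 F p = 0 := fun p hp =>
    eq_zero_of_pde_i_iii hp.2 (sq_ne_one_of_mem_parabolicRegion hIm1 hI1 hp)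
      (heq1 p hp) (heq3 p hp)
  have hGF : ∀ p ∈ parabolicRegion I,
      ((n : ℝ) - 2) * G p = n * p.2 * F p + (1 - p.2 ^ 2) * pd1 F p := fun p hp =>
    sub_two_mul_eq_of_pde_ii_iv (ne_of_mem_of_not_mem hp.1 hI0) (hF0 p hp) (heq2 p hp) (heq4 p hp)
  have hG0 : ∀ p ∈ parabolicRegion I, pd0 G p = 0 := by
    refine fun p hp => pd0_eq_zero_of_eq_along_rows hΩo (fun a b y ha hb => ?_) hp
      ((hG.differentiableOn one_ne_zero).differentiableAt (hΩo.mem_nhds hp))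
    have hrows := isPreconnected_parabolicRegion_row (I := I)
    have hGa := hGF (a, y) ha
    rw [eq_of_pd0_eq_zero hΩo hrows hFd hF0 ha hb, pd1_eq_of_pd0_eq_zero hΩo hrows hFd hF0 ha hb,
      ← hGF (b, y) hb] at hGa
    exact mul_left_cancel₀ (by linarith) hGa
  have hG_zero : ∀ p ∈ parabolicRegion I, G p = 0 := fun p hp =>
    eq_zero_of_pde_i (by linarith) (hF0 p hp) (hG0 p hp) (heq1 p hp)
  refine fun p hp => ⟨?_, hG_zero p hp⟩
  have hGnear : G =ᶠ[𝓝 p] 0 := eventually_of_mem (hΩo.mem_nhds hp) hG_zero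
  exact eq_zero_of_pde_ii_iv (by positivity) (hF0 p hp) (hG_zero p hp) (hG0 p hp)
    (pd1_eq_zero_of_eventuallyEq_zero hGnear) (heq2 p hp) (heq4 p hp)

/-- No-go theorem: the four PDEs arising from the conservation equation for a
spin-`n` current ansatz of the auxiliary-field free boson force `F = G = 0`
on `Ω = {(X₀, X₁) | X₁ ∈ I, X₀ > X₁²}` for `n ≥ 3`. -/
theorem stmt0 (n : ℕ) (hn : 3 ≤ n)
    (I : Set ℝ) (hIopen : IsOpen I) (hIconn : I.OrdConnected) (hIne : I.Nonempty)
    (hIm1 : (-1 : ℝ) ∉ I) (hI0 : (0 : ℝ) ∉ I) (hI1 : (1 : ℝ) ∉ I)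
    (Ω : Set (ℝ × ℝ)) (hΩ : Ω = {p : ℝ × ℝ | p.2 ∈ I ∧ p.2 ^ 2 < p.1})
    (F G : ℝ × ℝ → ℝ)
    (hF : ContDiffOn ℝ 1 F Ω) (hG : ContDiffOn ℝ 1 G Ω)
    (heq1 : ∀ p ∈ Ω,
      ((n : ℝ) - 1) * G p + (p.1 - p.2 ^ 2) * (p.2 * pd0 F p - pd0 G p) = 0)
    (heq2 : ∀ p ∈ Ω,
      (n : ℝ) * F p - p.2 * pd1 F p + pd1 G p - p.1 * pd0 F p
        + (p.1 / p.2) * pd0 G p = 0)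
    (heq3 : ∀ p ∈ Ω,
      (1 - (n : ℝ)) * p.2 * G p + (p.1 - p.2 ^ 2) * (p.2 * pd0 G p - pd0 F p) = 0)
    (heq4 : ∀ p ∈ Ω,
      pd1 F p - ((n : ℝ) - 2) * G p - p.2 * pd1 G p
        + (p.1 / p.2) * pd0 F p - p.1 * pd0 G p = 0) :
    ∀ p ∈ Ω, F p = 0 ∧ G p = 0 :=
  stmt0_general n hn I hIopen hIm1 hI0 hI1 Ω hΩ F G hF hG heq1 heq2 heq3 heq4
end

section
/- Let n be a real number, let I ⊆ ℝ be a nonempty open interval with 1 ∉ I and −1 ∉ I, let Ω = {(X₀, X₁) ∈ ℝ² : X₁ ∈ I and X₀ > X₁²}, and let F, G : Ω → ℝ be continuously differentiable. If at every point of Ω both (n−1)G + (X₀−X₁²)(X₁ F_{X₀} − G_{X₀}) = 0 and (1−n)X₁ G + (X₀−X₁²)(X₁ G_{X₀} − F_{X₀}) = 0 hold, then at every point of Ω one has ∂F/∂X₀ = 0 and (n−1)G = (X₀−X₁²)·∂G/∂X₀. -/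
/-- First reduction step of the no-go theorem: the two equations not
multiplying `E″` imply that `F` is independent of `X₀` and that
`(n−1)G = (X₀−X₁²) ∂G/∂X₀` on `Ω`. -/
theorem stmt1 (n : ℝ)
    (I : Set ℝ) (hIopen : IsOpen I) (hIconn : I.OrdConnected) (hIne : I.Nonempty)
    (hI1 : (1 : ℝ) ∉ I) (hIm1 : (-1 : ℝ) ∉ I)
    (Ω : Set (ℝ × ℝ)) (hΩ : Ω = {p : ℝ × ℝ | p.2 ∈ I ∧ p.2 ^ 2 < p.1})
    (F G : ℝ × ℝ → ℝ)
    (hF : ContDiffOn ℝ 1 F Ω) (hG : ContDiffOn ℝ 1 G Ω)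
    (heq1 : ∀ p ∈ Ω,
      (n - 1) * G p + (p.1 - p.2 ^ 2) * (p.2 * pd0 F p - pd0 G p) = 0)
    (heq2 : ∀ p ∈ Ω,
      (1 - n) * p.2 * G p + (p.1 - p.2 ^ 2) * (p.2 * pd0 G p - pd0 F p) = 0) :
    ∀ p ∈ Ω, pd0 F p = 0 ∧ (n - 1) * G p = (p.1 - p.2 ^ 2) * pd0 G p := by
  intro p hp
  have hmem : p.2 ∈ I ∧ p.2 ^ 2 < p.1 := by rw [hΩ] at hp; exact hp
  have h1 : p.2 ≠ 1 := fun h => hI1 (h ▸ hmem.1)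
  have h2 : p.2 ≠ -1 := fun h => hIm1 (h ▸ hmem.1)
  have hD : p.1 - p.2 ^ 2 > 0 := by linarith [hmem.2]
  have e1 := heq1 p hp
  have e2 := heq2 p hp
  have key : (p.1 - p.2 ^ 2) * (p.2 ^ 2 - 1) * pd0 F p = 0 := by linear_combination p.2 * e1 + e2
  have ht : p.2 ^ 2 - 1 ≠ 0 := by
    intro h
    have : (p.2 - 1) * (p.2 + 1) = 0 := by ring_nf; linarith
    rcases mul_eq_zero.mp this with h' | h'
    · exact h1 (by linarith)
    · exact h2 (by linarith)
  have hFp : pd0 F p = 0 := by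
    have := mul_eq_zero.mp key
    rcases this with h | h
    · exact absurd h (mul_ne_zero (ne_of_gt hD) ht)
    · exact h
  refine ⟨hFp, ?_⟩
  rw [hFp] at e1
  linarith [e1]
end

section
/- Let n ≥ 3 be an integer, let I ⊆ ℝ \ {0} be a nonempty open interval, and let F, G̃ : I → ℝ be differentiable. Suppose that for every X₁ ∈ I and every X₀ ∈ ℝ with X₀ > X₁², both equations hold: X₁ F′(X₁) − n F(X₁) = (1/X₁)·(X₀−X₁²)^{n−2}·((n−1)(X₀−2X₁²) G̃(X₁) + X₁ (X₀−X₁²) G̃′(X₁)), and F′(X₁) = −(X₀−X₁²)^{n−2}·(G̃(X₁)·((3−2n)X₀ + (3n−4)X₁²) − X₁ (X₀−X₁²) G̃′(X₁)). Then F = 0 and G̃ = 0 identically on I. -/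
/-- Final step of the no-go theorem: the two over-determined relations,
whose left sides depend only on `X₁` but whose right sides depend on `X₀`,
force `F = G̃ = 0` for `n ≥ 3`. -/
theorem stmt2 (n : ℕ) (hn : 3 ≤ n)
    (I : Set ℝ) (hIopen : IsOpen I) (hIconn : I.OrdConnected) (hIne : I.Nonempty)
    (hI0 : ∀ x ∈ I, x ≠ 0)
    (F Gt : ℝ → ℝ) (hF : DifferentiableOn ℝ F I) (hGt : DifferentiableOn ℝ Gt I)
    (heq1 : ∀ X₁ ∈ I, ∀ X₀ : ℝ, X₁ ^ 2 < X₀ →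
      X₁ * deriv F X₁ - (n : ℝ) * F X₁ =
        (1 / X₁) * (X₀ - X₁ ^ 2) ^ (n - 2) *
          (((n : ℝ) - 1) * (X₀ - 2 * X₁ ^ 2) * Gt X₁
            + X₁ * (X₀ - X₁ ^ 2) * deriv Gt X₁))
    (heq2 : ∀ X₁ ∈ I, ∀ X₀ : ℝ, X₁ ^ 2 < X₀ →
      deriv F X₁ =
        -((X₀ - X₁ ^ 2) ^ (n - 2) *
          (Gt X₁ * ((3 - 2 * (n : ℝ)) * X₀ + (3 * (n : ℝ) - 4) * X₁ ^ 2)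
            - X₁ * (X₀ - X₁ ^ 2) * deriv Gt X₁))) :
    ∀ X₁ ∈ I, F X₁ = 0 ∧ Gt X₁ = 0 := by
  intro X₁ hX₁
  have hx0 : X₁ ≠ 0 := hI0 X₁ hX₁
  obtain ⟨k, rfl⟩ : ∃ k, n = k + 2 := ⟨n - 2, by omega⟩
  have hk1 : 1 ≤ k := by omega
  set c := deriv F X₁ with hc
  set G := Gt X₁ with hG
  set G' := deriv Gt X₁ with hG'
  have h1 := heq2 X₁ hX₁ (X₁ ^ 2 + 1) (by linarith)
  have h2 := heq2 X₁ hX₁ (X₁ ^ 2 + 2) (by linarith)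
  have h3 := heq2 X₁ hX₁ (X₁ ^ 2 + 4) (by linarith)
  have hkk : k + 2 - 2 = k := by omega
  rw [hkk, show X₁ ^ 2 + 1 - X₁ ^ 2 = (1:ℝ) by ring] at h1
  rw [hkk, show X₁ ^ 2 + 2 - X₁ ^ 2 = (2:ℝ) by ring] at h2
  rw [hkk, show X₁ ^ 2 + 4 - X₁ ^ 2 = (4:ℝ) by ring] at h3
  rw [one_pow] at h1
  set p : ℝ := 2 ^ k with hpdef
  have hp2 : (2:ℝ) ≤ p := by
    calc (2:ℝ) = 2 ^ 1 := by norm_num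
    _ ≤ 2 ^ k := pow_le_pow_right₀ (by norm_num) hk1
  have h4 : (4:ℝ) ^ k = p ^ 2 := by
    rw [hpdef, show (4:ℝ) = 2 ^ 2 by norm_num, ← pow_mul, ← pow_mul, Nat.mul_comm]
  rw [h4] at h3
  set a : ℝ := (3 - 2 * ((k:ℝ) + 2)) * G - X₁ * G' with ha
  set b : ℝ := ((k:ℝ) + 1) * X₁ ^ 2 * G with hb
  have e1 : c = -(a + b) := by
    rw [ha, hb]; push_cast at h1 ⊢; linear_combination h1
  have e2 : c = -(p * (2 * a + b)) := by
    rw [ha, hb]; push_cast at h2 ⊢; linear_combination h2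
  have e3 : c = -(p ^ 2 * (4 * a + b)) := by
    rw [ha, hb]; push_cast at h3 ⊢; linear_combination h3
  have hbz : b = 0 := by
    have key : b * (p - 1) * p = 0 := by
      linear_combination (2 * p + 1) * e2 - e3 - 2 * p * e1
    have : p - 1 ≠ 0 := by linarith
    have : p ≠ 0 := by linarith
    rcases mul_eq_zero.mp key with h | h
    · rcases mul_eq_zero.mp h with h' | h'
      · exact h'
      · exact absurd h' ‹p - 1 ≠ 0›
    · exact absurd h ‹p ≠ 0›
  have haz : a = 0 := by
    have key : a * (2 * p - 1) = 0 := by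
      linear_combination e2 - e1 - (p - 1) * hbz
    have : 2 * p - 1 ≠ 0 := by linarith
    rcases mul_eq_zero.mp key with h | h
    · exact h
    · exact absurd h this
  have hGz : G = 0 := by
    have hx2 : X₁ ^ 2 ≠ 0 := pow_ne_zero _ hx0
    have hk0 : ((k:ℝ) + 1) ≠ 0 := by positivity
    have := hbz
    rw [hb] at this
    rcases mul_eq_zero.mp this with h | h
    · rcases mul_eq_zero.mp h with h' | h'
      · exact absurd h' hk0
      · exact absurd h' hx2
    · exact h
  have hG'z : G' = 0 := by
    have := haz
    rw [ha, hGz] at this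
    have : X₁ * G' = 0 := by linarith
    rcases mul_eq_zero.mp this with h | h
    · exact absurd h hx0
    · exact h
  have hcz : c = 0 := by rw [e1, haz, hbz]; ring
  have h5 := heq1 X₁ hX₁ (X₁ ^ 2 + 1) (by linarith)
  rw [hkk, show X₁ ^ 2 + 1 - X₁ ^ 2 = (1:ℝ) by ring, one_pow] at h5
  rw [← hc, ← hG, ← hG', hcz, hGz, hG'z] at h5
  have hF0 : F X₁ = 0 := by
    have hn0 : ((k:ℝ) + 2) ≠ 0 := by positivity
    push_cast at h5
    have : ((k:ℝ) + 2) * F X₁ = 0 := by linarith [h5]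
    rcases mul_eq_zero.mp this with h | h
    · exact absurd h hn0
    · exact h
  exact ⟨hF0, hGz⟩
end

section
/- Let n ≥ 2 be an integer, let E : (0,∞) → ℝ be twice continuously differentiable with E″(ν) ≠ 0 for all ν > 0, and let f, g : (0,∞) → ℝ be continuously differentiable functions satisfying for all ν > 0: ν f′(ν) + n f(ν) + (ν g′(ν) + (n−2) g(ν))/(ν² E″(ν)) − f′(ν)(E′(ν) + ν E″(ν))/E″(ν) = 0 and g′(ν) − (E′(ν) + ν E″(ν))(ν g′(ν) + (n−2) g(ν))/(ν² E″(ν)) + f′(ν)/E″(ν) = 0. Let φ : ℝ² → ℝ be twice continuously differentiable and v₊, v₋ : ℝ² → ℝ continuously differentiable with v₊(σ)v₋(σ) > 0 for all σ ∈ ℝ², and suppose the equations of motion ∂₊∂₋φ + ∂₋v₊ + ∂₊v₋ = 0, (1+E′(v₊v₋))v₋ + ∂₋φ = 0, and (1+E′(v₊v₋))v₊ + ∂₊φ = 0 hold everywhere on ℝ². Then the spin-n current is conserved: ∂₋( f(v₊v₋) · v₊ⁿ ) + ∂₊( g(v₊v₋) · v₊ⁿ⁻² ) = 0 everywhere on ℝ².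 -/
/-!
Differentiating the two algebraic equations of motion and eliminating `∂₊∂₋φ` with the first one
(using symmetry of the second derivative of `φ`) gives, at each point, two linear relations among
the four first derivatives `∂±v₊`, `∂±v₋`. The derivative of the current is linear in those four
derivatives; modulo the two relations, and after multiplying by `v₋² E''(ν)`, its remaining
coefficients are `ν² E''(ν)` times the left-hand sides of the two ODEs, hence zero.
-/

/-- Light-cone partial derivative `∂₊` on the worldsheet `ℝ²`. -/
noncomputable def dplus (h : ℝ × ℝ → ℝ) (p : ℝ × ℝ) : ℝ := fderiv ℝ h p (1, 0)

/-- Light-cone partial derivative `∂₋` on the worldsheet `ℝ²`. -/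
noncomputable def dminus (h : ℝ × ℝ → ℝ) (p : ℝ × ℝ) : ℝ := fderiv ℝ h p (0, 1)

section
variable {F G : Type*} [NormedAddCommGroup F] [NormedSpace ℝ F] [NormedAddCommGroup G]
  [NormedSpace ℝ G]

theorem ContDiffOn.hasDerivAt_deriv {f : ℝ → ℝ} {s : Set ℝ} {k : WithTop ℕ∞}
    (hf : ContDiffOn ℝ k f s) (hs : IsOpen s) (hk : k ≠ 0) {x : ℝ} (hx : x ∈ s) :
    HasDerivAt f (deriv f x) x :=
  ((hf.contDiffAt (hs.mem_nhds hx)).differentiableAt hk).hasDerivAt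

theorem hasFDerivAt_fderiv_apply {φ : F → G} (hφ : ContDiff ℝ 2 φ) (v : F) (p : F) :
    HasFDerivAt (fun q => fderiv ℝ φ q v) ((fderiv ℝ (fderiv ℝ φ) p).flip v) p := by
  have hφ' := ((hφ.fderiv_right (m := 1) (by norm_num)).differentiable one_ne_zero p).hasFDerivAt
  simpa using hφ'.clm_apply (hasFDerivAt_const v p)

theorem fderiv_fderiv_apply_comm {φ : F → G} (hφ : ContDiff ℝ 2 φ) (v w p : F) :
    fderiv ℝ (fun q => fderiv ℝ φ q v) p w = fderiv ℝ (fun q => fderiv ℝ φ q w) p v := by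
  rw [(hasFDerivAt_fderiv_apply hφ v p).fderiv, (hasFDerivAt_fderiv_apply hφ w p).fderiv]
  exact hφ.contDiffAt.isSymmSndFDerivAt (by simp) w v

theorem linearized_eom {a : ℝ → ℝ} {a' : ℝ} {ν w χ : F → ℝ} {ν' w' : F →L[ℝ] ℝ} {p : F}
    (ha : HasDerivAt a a' (ν p)) (hν : HasFDerivAt ν ν' p) (hw : HasFDerivAt w w' p)
    (hχ : DifferentiableAt ℝ χ p) (h : ∀ q, (1 + a (ν q)) * w q + χ q = 0) (ξ : F) :
    (1 + a (ν p)) * w' ξ + w p * (a' * ν' ξ) + fderiv ℝ χ p ξ = 0 := by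
  have hL : HasFDerivAt (fun q => (1 + a (ν q)) * w q + χ q) _ p :=
    (((ha.comp_hasFDerivAt p hν).const_add 1).mul hw).add hχ.hasFDerivAt
  rw [funext h] at hL
  simpa using congrArg (· ξ) (hL.unique (hasFDerivAt_const 0 p))

/-- Multiplying by `u p` avoids the exponent `k - 1`, which truncates at `k = 0`. -/
theorem mul_fderiv_comp_mul_pow_apply {h : ℝ → ℝ} {h' : ℝ} {ν u : F → ℝ} {ν' u' : F →L[ℝ] ℝ}
    {p : F} (hh : HasDerivAt h h' (ν p)) (hν : HasFDerivAt ν ν' p) (hu : HasFDerivAt u u' p)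
    (k : ℕ) (ξ : F) :
    u p * fderiv ℝ (fun q => h (ν q) * u q ^ k) p ξ
      = u p ^ k * (h' * ν' ξ * u p + k * h (ν p) * u' ξ) := by
  have hD : HasFDerivAt (fun q => h (ν q) * u q ^ k) _ p :=
    (hh.comp_hasFDerivAt p hν).mul (hu.pow k)
  rw [hD.fderiv]
  rcases k with _ | k <;>
  · simp only [add_apply, smul_apply, smul_eq_mul,
      Function.comp_apply, Nat.cast_add, Nat.cast_one, Nat.add_sub_cancel, pow_zero]
    ring
end

theorem conservation_of_linearized_eom {n E₁ E₂ f₀ f₁ g₀ g₁ u w dpu dmu dpw dmw φpm : ℝ}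
    (hu : u ≠ 0) (hw : w ≠ 0) (hE₂ : E₂ ≠ 0)
    (hode1 : u * w * f₁ + n * f₀ + (u * w * g₁ + (n - 2) * g₀) / ((u * w) ^ 2 * E₂)
      - f₁ * (E₁ + u * w * E₂) / E₂ = 0)
    (hode2 : g₁ - (E₁ + u * w * E₂) * (u * w * g₁ + (n - 2) * g₀) / ((u * w) ^ 2 * E₂)
      + f₁ / E₂ = 0)
    (heom : φpm + dmu + dpw = 0)
    (heom_p : (1 + E₁) * dpw + w * (E₂ * (u * dpw + w * dpu)) + φpm = 0)
    (heom_m : (1 + E₁) * dmu + u * (E₂ * (u * dmw + w * dmu)) + φpm = 0) :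
    u ^ 2 * (f₁ * (u * dmw + w * dmu) * u + n * f₀ * dmu)
      + (g₁ * (u * dpw + w * dpu) * u + (n - 2) * g₀ * dpu) = 0 := by
  have key : w ^ 2 * E₂ * (u ^ 2 * (f₁ * (u * dmw + w * dmu) * u + n * f₀ * dmu)
      + (g₁ * (u * dpw + w * dpu) * u + (n - 2) * g₀ * dpu)) = 0 := by
    linear_combination (norm := skip) u ^ 2 * w ^ 2 * f₁ * (heom_m - heom)
      + (u * w * g₁ + (n - 2) * g₀) * (heom_p - heom)
      + E₂ * (u * w) ^ 2 * (dmu * hode1 + dpw * hode2)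
    field_simp
    ring
  simpa [hw, hE₂] using key



/-- If `(f, g)` solve the conservation ODE system for the auxiliary-field free
boson with interaction function `E`, then on-shell the spin-`n` current
`τ₊ₙ = f(ν)v₊ⁿ`, `θ₊₍ₙ₋₂₎ = g(ν)v₊ⁿ⁻²` (with `ν = v₊v₋`) is conserved. -/
theorem stmt3 (n : ℕ) (hn : 2 ≤ n) (E f g : ℝ → ℝ)
    (hE : ContDiffOn ℝ 2 E (Set.Ioi 0))
    (hE'' : ∀ ν > (0 : ℝ), deriv (deriv E) ν ≠ 0)
    (hf : ContDiffOn ℝ 1 f (Set.Ioi 0)) (hg : ContDiffOn ℝ 1 g (Set.Ioi 0))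
    (hode1 : ∀ ν > (0 : ℝ),
      ν * deriv f ν + (n : ℝ) * f ν
        + (ν * deriv g ν + ((n : ℝ) - 2) * g ν) / (ν ^ 2 * deriv (deriv E) ν)
        - deriv f ν * (deriv E ν + ν * deriv (deriv E) ν) / deriv (deriv E) ν = 0)
    (hode2 : ∀ ν > (0 : ℝ),
      deriv g ν
        - (deriv E ν + ν * deriv (deriv E) ν)
            * (ν * deriv g ν + ((n : ℝ) - 2) * g ν) / (ν ^ 2 * deriv (deriv E) ν)
        + deriv f ν / deriv (deriv E) ν = 0)
    (φ vp vm : ℝ × ℝ → ℝ)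
    (hφ : ContDiff ℝ 2 φ) (hvp : ContDiff ℝ 1 vp) (hvm : ContDiff ℝ 1 vm)
    (hpos : ∀ p : ℝ × ℝ, 0 < vp p * vm p)
    (heom1 : ∀ p : ℝ × ℝ,
      dplus (fun q => dminus φ q) p + dminus vp p + dplus vm p = 0)
    (heom2 : ∀ p : ℝ × ℝ,
      (1 + deriv E (vp p * vm p)) * vm p + dminus φ p = 0)
    (heom3 : ∀ p : ℝ × ℝ,
      (1 + deriv E (vp p * vm p)) * vp p + dplus φ p = 0) :
    ∀ p : ℝ × ℝ,
      dminus (fun q => f (vp q * vm q) * vp q ^ n) p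
        + dplus (fun q => g (vp q * vm q) * vp q ^ (n - 2)) p = 0 := by
  obtain ⟨m, rfl⟩ := Nat.exists_eq_add_of_le' hn
  intro p
  have hν : 0 < vp p * vm p := hpos p
  have hvp_ne : vp p ≠ 0 := left_ne_zero_of_mul hν.ne'
  have hvm_ne : vm p ≠ 0 := right_ne_zero_of_mul hν.ne'
  have dvp := (hvp.differentiable one_ne_zero p).hasFDerivAt
  have dvm := (hvm.differentiable one_ne_zero p).hasFDerivAt
  have dν : HasFDerivAt (fun q => vp q * vm q) _ p := dvp.mul dvm
  have dE' := (hE.deriv_of_isOpen isOpen_Ioi (m := 1) (by norm_num)).hasDerivAt_deriv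
    isOpen_Ioi one_ne_zero hν
  have heom_p := linearized_eom (ν := fun q => vp q * vm q) (χ := dminus φ) dE' dν dvm
    (hasFDerivAt_fderiv_apply hφ (0, 1) p).differentiableAt heom2 (1, 0)
  have heom_m := linearized_eom (ν := fun q => vp q * vm q) (χ := dplus φ) dE' dν dvp
    (hasFDerivAt_fderiv_apply hφ (1, 0) p).differentiableAt heom3 (0, 1)
  rw [show fderiv ℝ (dplus φ) p (0, 1) = dplus (dminus φ) p from
    fderiv_fderiv_apply_comm hφ _ _ p] at heom_m
  simp only [add_apply, smul_apply, smul_eq_mul] at heom_p heom_m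
  have hcons := conservation_of_linearized_eom hvp_ne hvm_ne (hE'' _ hν) (hode1 _ hν) (hode2 _ hν)
    (heom1 p) heom_p heom_m
  refine (mul_eq_zero.mp ?_).resolve_left hvp_ne
  rw [mul_add, dminus, dplus, Nat.add_sub_cancel,
    mul_fderiv_comp_mul_pow_apply (ν := fun q => vp q * vm q)
      (hf.hasDerivAt_deriv isOpen_Ioi one_ne_zero hν) dν dvp,
    mul_fderiv_comp_mul_pow_apply (ν := fun q => vp q * vm q)
      (hg.hasDerivAt_deriv isOpen_Ioi one_ne_zero hν) dν dvp]
  simp only [add_apply, smul_apply, smul_eq_mul]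
  unfold dplus dminus at hcons
  push_cast at hcons ⊢
  linear_combination vp p ^ m * hcons
end

section
/- Let N ≥ 1, let a ∈ ℝ, and let v₊, v₋, Δ₊, Δ₋, C₊, C₋ : ℝ² → M_N(ℝ) be continuously differentiable matrix-valued fields on a worldsheet ℝ² with light-cone partial derivatives ∂₊, ∂₋. Define A± := −(v± + Δ±) and B± := Δ± − v±, and for any matrix-valued field X define D±X := ∂±X + C±X − XC±. Suppose that at every point of ℝ²: (i) Δ₊v₋ = v₋Δ₊ and Δ₋v₊ = v₊Δ₋; (ii) D₊B₋ + D₋B₊ = 0; and (iii) D₊A₋ − D₋A₊ + a(A₊A₋ − A₋A₊) = 0. Then for every integer m ≥ 1, at every point of ℝ²: ∂₋ tr(v₊ᵐ) = m · tr(v₊^{m−1} ∂₊Δ₋) and ∂₊ tr(v₋ᵐ) = m · tr(v₋^{m−1} ∂₋Δ₊). -/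
/-!
Subtracting and adding the two equations of motion expresses `∂₋v₊ - ∂₊Δ₋` and `∂₊v₋ - ∂₋Δ₊`
as sums of commutators `[C₊, Δ₋]`, `[C₋, v₊]`, `[A₊, A₋]` (resp. their mirror images). Since `Δ∓`
commutes with `v±`, the interaction term reduces to `[v₊, v₋] + [Δ₊, Δ₋]`, so every commutator
on the right has an entry commuting with `v±`, and each is therefore killed by `X ↦ tr(v±ᵏ X)`.
The claim follows from the Leibniz rule `∂ tr(vᵐ) = m tr(vᵐ⁻¹ ∂v)`.
-/

variable {N : ℕ}

/-- Entrywise partial derivative of a matrix-valued field on `ℝ²` in the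
direction `w`. -/
noncomputable def mpd (w : ℝ × ℝ) (X : ℝ × ℝ → Matrix (Fin N) (Fin N) ℝ)
    (p : ℝ × ℝ) : Matrix (Fin N) (Fin N) ℝ :=
  Matrix.of fun i j => fderiv ℝ (fun q => X q i j) p w

/-- A matrix-valued field is continuously differentiable (entrywise). -/
def MatC1 (X : ℝ × ℝ → Matrix (Fin N) (Fin N) ℝ) : Prop :=
  ∀ i j, ContDiff ℝ 1 fun q => X q i j

/-- Covariant derivative `D X = ∂X + [C, X]` in the direction `w` with
connection `C`. -/
noncomputable def covD (w : ℝ × ℝ) (C X : ℝ × ℝ → Matrix (Fin N) (Fin N) ℝ)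
    (p : ℝ × ℝ) : Matrix (Fin N) (Fin N) ℝ :=
  mpd w X p + C p * X p - X p * C p

theorem commutator_neg_add_neg_add {R : Type*} [Ring R] {vp vm Δp Δm : R}
    (hp : Commute Δp vm) (hm : Commute Δm vp) :
    -(vp + Δp) * -(vm + Δm) - -(vm + Δm) * -(vp + Δp)
      = (vp * vm - vm * vp) + (Δp * Δm - Δm * Δp) := by
  simp only [neg_mul_neg, add_mul, mul_add, hp.eq, hm.eq]
  abel

namespace Matrix

variable {n K : Type*} [Fintype n]

theorem trace_mul_commutator_eq_zero_of_commute_right [CommRing K] {V X Y : Matrix n n K}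
    (h : Commute V Y) : trace (V * (X * Y - Y * X)) = 0 := by
  rw [mul_sub, trace_sub, ← mul_assoc, trace_mul_comm, ← mul_assoc, ← h.eq, mul_assoc, sub_self]

theorem trace_mul_commutator_eq_zero_of_commute_left [CommRing K] {V X Y : Matrix n n K}
    (h : Commute V X) : trace (V * (X * Y - Y * X)) = 0 := by
  rw [← neg_sub, mul_neg, trace_neg, trace_mul_commutator_eq_zero_of_commute_right h, neg_zero]

/-- Here `dvp, dΔm, dvm, dΔp` stand for `∂₋v₊, ∂₊Δ₋, ∂₊v₋, ∂₋Δ₊`, and `hB`, `hA` are the equations of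
motion `D₊B₋ + D₋B₊ = 0` and `D₊A₋ - D₋A₊ + a[A₊, A₋] = 0` written out. -/
theorem trace_pow_mul_eq_of_eom [DecidableEq n] [Field K] [NeZero (2 : K)]
    {a : K} {vp vm Δp Δm Cp Cm dvp dvm dΔp dΔm : Matrix n n K}
    (hp : Commute Δp vm) (hm : Commute Δm vp)
    (hB : dΔm - dvm + Cp * (Δm - vm) - (Δm - vm) * Cp
        + (dΔp - dvp + Cm * (Δp - vp) - (Δp - vp) * Cm) = 0)
    (hA : -(dvm + dΔm) + Cp * -(vm + Δm) - -(vm + Δm) * Cp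
        - (-(dvp + dΔp) + Cm * -(vp + Δp) - -(vp + Δp) * Cm)
        + a • (-(vp + Δp) * -(vm + Δm) - -(vm + Δm) * -(vp + Δp)) = 0) (k : ℕ) :
    trace (vp ^ k * dvp) = trace (vp ^ k * dΔm) := by
  have hdiff : (2 : K) • (dvp - dΔm) = (2 : K) • (Cp * Δm - Δm * Cp)
      - (2 : K) • (Cm * vp - vp * Cm) - a • ((vp * vm - vm * vp) + (Δp * Δm - Δm * Δp)) := by
    rw [commutator_neg_add_neg_add hp hm] at hA
    simp only [mul_add, add_mul, mul_sub, sub_mul, mul_neg, neg_mul] at hB hA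
    linear_combination (norm := module) hA - hB
  have hvp : Commute (vp ^ k) vp := (Commute.refl vp).pow_left k
  have hΔm : Commute (vp ^ k) Δm := hm.symm.pow_left k
  have h : trace (vp ^ k * ((2 : K) • (dvp - dΔm))) = 0 := by
    rw [hdiff, mul_sub, mul_sub, mul_smul_comm, mul_smul_comm, mul_smul_comm, mul_add,
      trace_sub, trace_sub, trace_smul, trace_smul, trace_smul, trace_add,
      trace_mul_commutator_eq_zero_of_commute_right hΔm,
      trace_mul_commutator_eq_zero_of_commute_right hvp,
      trace_mul_commutator_eq_zero_of_commute_left hvp,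
      trace_mul_commutator_eq_zero_of_commute_right hΔm]
    simp
  rwa [mul_smul_comm, trace_smul, smul_eq_zero, or_iff_right two_ne_zero, mul_sub, trace_sub,
    sub_eq_zero] at h

end Matrix

section Calculus

variable {X Y : ℝ × ℝ → Matrix (Fin N) (Fin N) ℝ}

theorem MatC1.differentiableAt (hX : MatC1 X) (i j : Fin N) (p : ℝ × ℝ) :
    DifferentiableAt ℝ (fun q => X q i j) p :=
  ((hX i j).differentiable one_ne_zero).differentiableAt

theorem MatC1.mul (hX : MatC1 X) (hY : MatC1 Y) : MatC1 (X * Y) := fun i j => by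
  simp only [Pi.mul_apply, Matrix.mul_apply]
  exact ContDiff.sum fun k _ => (hX i k).mul (hY k j)

theorem MatC1.pow (hX : MatC1 X) : ∀ m : ℕ, MatC1 (X ^ m)
  | 0 => fun i j => by simp only [pow_zero, Pi.one_apply]; exact contDiff_const
  | m + 1 => by rw [pow_succ]; exact (hX.pow m).mul hX

theorem mpd_add (hX : MatC1 X) (hY : MatC1 Y) (w p : ℝ × ℝ) :
    mpd w (X + Y) p = mpd w X p + mpd w Y p := by
  ext i j
  simp only [mpd, Matrix.of_apply, Matrix.add_apply, Pi.add_apply]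
  rw [fderiv_fun_add (hX.differentiableAt i j p) (hY.differentiableAt i j p)]
  rfl

theorem mpd_sub (hX : MatC1 X) (hY : MatC1 Y) (w p : ℝ × ℝ) :
    mpd w (X - Y) p = mpd w X p - mpd w Y p := by
  ext i j
  simp only [mpd, Matrix.of_apply, Matrix.sub_apply, Pi.sub_apply]
  rw [fderiv_fun_sub (hX.differentiableAt i j p) (hY.differentiableAt i j p)]
  rfl

theorem mpd_neg (w p : ℝ × ℝ) : mpd w (-X) p = -mpd w X p := by
  ext i j
  simp only [mpd, Matrix.of_apply, Matrix.neg_apply, Pi.neg_apply]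
  rw [fderiv_fun_neg]
  rfl

theorem mpd_mul (hX : MatC1 X) (hY : MatC1 Y) (w p : ℝ × ℝ) :
    mpd w (X * Y) p = mpd w X p * Y p + X p * mpd w Y p := by
  ext i j
  simp only [mpd, Matrix.of_apply, Matrix.add_apply, Matrix.mul_apply, Pi.mul_apply,
    ← Finset.sum_add_distrib]
  rw [fderiv_fun_sum (A := fun k q => X q i k * Y q k j)
    fun k _ => (hX.differentiableAt i k p).mul (hY.differentiableAt k j p), sum_apply]
  refine Finset.sum_congr rfl fun k _ => ?_
  rw [fderiv_fun_mul (hX.differentiableAt i k p) (hY.differentiableAt k j p)]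
  simp only [add_apply, smul_apply, smul_eq_mul]
  ring

theorem fderiv_trace (hX : MatC1 X) (w p : ℝ × ℝ) :
    fderiv ℝ (fun q => (X q).trace) p w = (mpd w X p).trace := by
  simp only [Matrix.trace, Matrix.diag, mpd, Matrix.of_apply]
  rw [fderiv_fun_sum fun i _ => hX.differentiableAt i i p, sum_apply]

theorem trace_mul_mpd_pow_succ (hX : MatC1 X) (w p : ℝ × ℝ) (m : ℕ) {V : Matrix (Fin N) (Fin N) ℝ}
    (hV : Commute V (X p)) :
    (V * mpd w (X ^ (m + 1)) p).trace = (m + 1 : ℝ) * (V * X p ^ m * mpd w X p).trace := by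
  induction m generalizing V with
  | zero => simp
  | succ m ih =>
    have hpow : Commute V (X p ^ (m + 1)) := hV.pow_right _
    rw [pow_succ' X, mpd_mul hX (hX.pow _), Pi.pow_apply, mul_add, Matrix.trace_add,
      ← mul_assoc, ← mul_assoc, ih (hV.mul_left (Commute.refl _)), mul_assoc V (X p),
      ← pow_succ', Matrix.trace_mul_comm, ← mul_assoc, ← hpow.eq]
    push_cast
    ring

theorem fderiv_trace_pow (hX : MatC1 X) (w p : ℝ × ℝ) (m : ℕ) :
    fderiv ℝ (fun q => (X q ^ m).trace) p w = m * (X p ^ (m - 1) * mpd w X p).trace := by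
  rcases m with _ | m
  · simp
  · have h := trace_mul_mpd_pow_succ hX w p m (Commute.one_left _)
    rw [one_mul, one_mul, ← fderiv_trace (hX.pow _)] at h
    simpa using h

end Calculus

theorem stmt5_general (N : ℕ) (a : ℝ)
    (vp vm Δp Δm Cp Cm : ℝ × ℝ → Matrix (Fin N) (Fin N) ℝ)
    (hvp : MatC1 vp) (hvm : MatC1 vm) (hΔp : MatC1 Δp) (hΔm : MatC1 Δm)
    (Ap Am Bp Bm : ℝ × ℝ → Matrix (Fin N) (Fin N) ℝ)
    (hAp : ∀ p, Ap p = -(vp p + Δp p)) (hAm : ∀ p, Am p = -(vm p + Δm p))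
    (hBp : ∀ p, Bp p = Δp p - vp p) (hBm : ∀ p, Bm p = Δm p - vm p)
    (hcomm1 : ∀ p, Δp p * vm p = vm p * Δp p)
    (hcomm2 : ∀ p, Δm p * vp p = vp p * Δm p)
    (hB : ∀ p, covD (1, 0) Cp Bm p + covD (0, 1) Cm Bp p = 0)
    (hA : ∀ p, covD (1, 0) Cp Am p - covD (0, 1) Cm Ap p
        + a • (Ap p * Am p - Am p * Ap p) = 0) :
    ∀ m : ℕ, 1 ≤ m → ∀ p : ℝ × ℝ,
      fderiv ℝ (fun q => Matrix.trace (vp q ^ m)) p (0, 1)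
          = (m : ℝ) * Matrix.trace (vp p ^ (m - 1) * mpd (1, 0) Δm p) ∧
      fderiv ℝ (fun q => Matrix.trace (vm q ^ m)) p (1, 0)
          = (m : ℝ) * Matrix.trace (vm p ^ (m - 1) * mpd (0, 1) Δp p) := by
  obtain rfl : Ap = -(vp + Δp) := funext hAp
  obtain rfl : Am = -(vm + Δm) := funext hAm
  obtain rfl : Bp = Δp - vp := funext hBp
  obtain rfl : Bm = Δm - vm := funext hBm
  intro m _ p
  specialize hB p
  specialize hA p
  simp only [covD, mpd_sub hΔm hvm, mpd_sub hΔp hvp, mpd_neg, mpd_add hvm hΔm, mpd_add hvp hΔp,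
    Pi.sub_apply, Pi.neg_apply, Pi.add_apply] at hB hA
  rw [fderiv_trace_pow hvp, fderiv_trace_pow hvm]
  refine ⟨congrArg _ (Matrix.trace_pow_mul_eq_of_eom (hcomm1 p) (hcomm2 p) hB hA _), ?_⟩
  -- the equations of motion are invariant under exchanging `+` and `-`
  refine congrArg _ (Matrix.trace_pow_mul_eq_of_eom (a := a) (hcomm2 p) (hcomm1 p)
    (by rwa [add_comm]) ?_ _)
  rw [← neg_eq_zero, ← hA]
  module

/-- The key identity of unified auxiliary-field sigma models:
`∂∓ tr(v±ᵐ) = m tr(v±^{m−1} ∂±Δ∓)`, given the common structure of the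
equations of motion. Here `∂₊` is the derivative in direction `(1,0)` and
`∂₋` in direction `(0,1)`. -/
theorem stmt5 (N : ℕ) (hN : 1 ≤ N) (a : ℝ)
    (vp vm Δp Δm Cp Cm : ℝ × ℝ → Matrix (Fin N) (Fin N) ℝ)
    (hvp : MatC1 vp) (hvm : MatC1 vm) (hΔp : MatC1 Δp) (hΔm : MatC1 Δm)
    (hCp : MatC1 Cp) (hCm : MatC1 Cm)
    (Ap Am Bp Bm : ℝ × ℝ → Matrix (Fin N) (Fin N) ℝ)
    (hAp : ∀ p, Ap p = -(vp p + Δp p)) (hAm : ∀ p, Am p = -(vm p + Δm p))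
    (hBp : ∀ p, Bp p = Δp p - vp p) (hBm : ∀ p, Bm p = Δm p - vm p)
    (hcomm1 : ∀ p, Δp p * vm p = vm p * Δp p)
    (hcomm2 : ∀ p, Δm p * vp p = vp p * Δm p)
    (hB : ∀ p, covD (1, 0) Cp Bm p + covD (0, 1) Cm Bp p = 0)
    (hA : ∀ p, covD (1, 0) Cp Am p - covD (0, 1) Cm Ap p
        + a • (Ap p * Am p - Am p * Ap p) = 0) :
    ∀ m : ℕ, 1 ≤ m → ∀ p : ℝ × ℝ,
      fderiv ℝ (fun q => Matrix.trace (vp q ^ m)) p (0, 1)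
          = (m : ℝ) * Matrix.trace (vp p ^ (m - 1) * mpd (1, 0) Δm p) ∧
      fderiv ℝ (fun q => Matrix.trace (vm q ^ m)) p (1, 0)
          = (m : ℝ) * Matrix.trace (vm p ^ (m - 1) * mpd (0, 1) Δp p) :=
  stmt5_general N a vp vm Δp Δm Cp Cm hvp hvm hΔp hΔm Ap Am Bp Bm hAp hAm hBp hBm hcomm1 hcomm2 hB
    hA
end

section
/- Let R be a commutative ring, let N ≥ 1, and let A, B, C be N×N matrices over R. Then for every integer m ≥ 1: tr( C^{m−1}(AB − BA) ) = Σ_{k=0}^{m−2} tr( A · Cᵏ · (BC − CB) · C^{m−2−k} ), where for m = 1 the right-hand side is the empty sum, equal to 0. -/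
/-- Trace identity: `tr(C^{m−1}[A,B]) = Σ_{k=0}^{m−2} tr(A Cᵏ [B,C] C^{m−2−k})`
for square matrices over a commutative ring (empty sum for `m = 1`). -/
theorem stmt6 (R : Type*) [CommRing R] (N : ℕ) (hN : 1 ≤ N)
    (A B C : Matrix (Fin N) (Fin N) R) :
    ∀ m : ℕ, 1 ≤ m →
      Matrix.trace (C ^ (m - 1) * (A * B - B * A)) =
        ∑ k ∈ Finset.range (m - 1),
          Matrix.trace (A * C ^ k * (B * C - C * B) * C ^ (m - 2 - k)) := by
  intro m hm
  set f : ℕ → R := fun k => Matrix.trace (A * C ^ k * B * C ^ (m - 1 - k)) with hf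
  have key : ∀ k ∈ Finset.range (m - 1),
      Matrix.trace (A * C ^ k * (B * C - C * B) * C ^ (m - 2 - k)) = f k - f (k + 1) := by
    intro k hk
    rw [Finset.mem_range] at hk
    have h1 : m - 1 - k = (m - 2 - k) + 1 := by omega
    have h2 : m - 1 - (k + 1) = m - 2 - k := by omega
    have hc : C * C ^ (m - 2 - k) = C ^ (m - 2 - k) * C :=
      (pow_succ' C (m - 2 - k)).symm.trans (pow_succ C (m - 2 - k))
    simp only [hf, h1, h2, pow_succ]
    rw [← Matrix.trace_sub]
    congr 1
    rw [← hc]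
    noncomm_ring
  rw [Finset.sum_congr rfl key, Finset.sum_range_sub']
  have hmk : m - 1 - (m - 1) = 0 := by omega
  simp only [hf, pow_zero, Nat.sub_zero, mul_one, Matrix.mul_one, hmk, Matrix.mul_one]
  rw [mul_sub, Matrix.trace_sub, Matrix.trace_mul_comm (C ^ (m-1)) (A * B),
    Matrix.trace_mul_comm (C ^ (m-1)) (B * A)]
  congr 1
  rw [Matrix.trace_mul_cycle, Matrix.trace_mul_cycle]
end

section
/- Let R be a commutative ring, let N ≥ 1, and let v₊, v₋, Δ₊, Δ₋ be N×N matrices over R satisfying Δ₊v₋ = v₋Δ₊ and Δ₋v₊ = v₊Δ₋. Define A± := −(v± + Δ±). Then for every integer n ≥ 1: tr( v₊^{n−1}(A₊A₋ − A₋A₊) ) = 0 and tr( v₋^{n−1}(A₊A₋ − A₋A₊) ) = 0. -/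
/-- If `Y` commutes with `v`, then `tr(v^k (XY - YX)) = 0` by cyclicity. -/
private lemma aux_tr {R : Type*} [CommRing R] {N : ℕ}
    (v X Y : Matrix (Fin N) (Fin N) R) (h : Y * v = v * Y) (k : ℕ) :
    Matrix.trace (v ^ k * (X * Y - Y * X)) = 0 := by
  have hk : Y * v ^ k = v ^ k * Y := ((Commute.pow_right (h : Commute Y v) k)).eq
  have h1 : Matrix.trace (v ^ k * (X * Y)) = Matrix.trace (v ^ k * (Y * X)) := by
    calc Matrix.trace (v ^ k * (X * Y)) = Matrix.trace (Y * (v ^ k * X)) := by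
          rw [← mul_assoc, Matrix.trace_mul_comm]
      _ = Matrix.trace (v ^ k * (Y * X)) := by rw [← mul_assoc, hk, mul_assoc]
  rw [mul_sub, Matrix.trace_sub, h1, sub_self]

/-- Same, with `X` commuting with `v`. -/
private lemma aux_tr' {R : Type*} [CommRing R] {N : ℕ}
    (v X Y : Matrix (Fin N) (Fin N) R) (h : X * v = v * X) (k : ℕ) :
    Matrix.trace (v ^ k * (X * Y - Y * X)) = 0 := by
  have := aux_tr v Y X h k
  have heq : X * Y - Y * X = -(Y * X - X * Y) := by abel
  rw [heq, mul_neg, Matrix.trace_neg, this, neg_zero]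

/-- Vanishing lemma of Appendix B: if `Δ±` commute with `v∓`, and
`A± = −(v± + Δ±)`, then `tr(v±^{n−1}[A₊, A₋]) = 0` for all `n ≥ 1`. -/
theorem stmt7 (R : Type*) [CommRing R] (N : ℕ) (hN : 1 ≤ N)
    (vp vm Δp Δm : Matrix (Fin N) (Fin N) R)
    (hcomm1 : Δp * vm = vm * Δp) (hcomm2 : Δm * vp = vp * Δm)
    (Ap Am : Matrix (Fin N) (Fin N) R)
    (hAp : Ap = -(vp + Δp)) (hAm : Am = -(vm + Δm)) :
    ∀ n : ℕ, 1 ≤ n →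
      Matrix.trace (vp ^ (n - 1) * (Ap * Am - Am * Ap)) = 0 ∧
      Matrix.trace (vm ^ (n - 1) * (Ap * Am - Am * Ap)) = 0 := by
  have key : Ap * Am - Am * Ap = (vp * vm - vm * vp) + (Δp * Δm - Δm * Δp) := by
    subst hAp hAm
    simp only [neg_mul, mul_neg, neg_neg, add_mul, mul_add]
    rw [hcomm1, hcomm2]
    abel
  intro n hn
  constructor
  · rw [key, mul_add, Matrix.trace_add,
      aux_tr' vp vp vm rfl (n - 1), aux_tr vp Δp Δm hcomm2 (n - 1), add_zero]
  · rw [key, mul_add, Matrix.trace_add,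
      aux_tr vm vp vm rfl (n - 1), aux_tr' vm Δp Δm hcomm1 (n - 1), add_zero]
end

section
/- Let k ≥ 1 be an integer, let E : (0,∞) → ℝ be twice continuously differentiable, and let f, g : (0,∞) → ℝ be continuously differentiable, such that for all x > 0 with 2xE″(x) + E′(x) ≠ 0: (i) x f′(x) + k f(x) + (x g′(x) + (k−1) g(x))/(x(4E″(x)x + 2E′(x))) − f′(x)·x·(4E″(x)x + 4E′(x))/(4E″(x)x + 2E′(x)) = 0, and (ii) g′(x) − (4E″(x)x + 4E′(x))·(x g′(x) + (k−1) g(x))/(x(4E″(x)x + 2E′(x))) + f′(x)/(4E″(x)x + 2E′(x)) = 0. Let a, b : ℝ² → (0,∞) be continuously differentiable and suppose that, writing x = a·b pointwise, one has 2xE″(x) + E′(x) ≠ 0 everywhere and the derivative relations hold at every point of ℝ²: ∂₋b = (1/a)·(1/(2(2E″(x)x + E′(x))))·( ∂₊b − 4(E′(x) + E″(x)x)·b·∂₋a ) and ∂₊a = (1/b)·(1/(2(2E″(x)x + E′(x))))·( ∂₋a − 4(E′(x) + E″(x)x)·a·∂₊b ). Then ∂₋( f(ab)·aᵏ ) + ∂₊(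 g(ab)·a^{k−1} ) = 0 everywhere on ℝ². -/
theorem fderiv_comp_mul_mul_pow_apply {V : Type*} [NormedAddCommGroup V] [NormedSpace ℝ V]
    {F : ℝ → ℝ} {a b : V → ℝ} {p : V} (ha : DifferentiableAt ℝ a p)
    (hb : DifferentiableAt ℝ b p) (hF : DifferentiableAt ℝ F (a p * b p)) (m : ℕ) (v : V) :
    fderiv ℝ (fun q => F (a q * b q) * a q ^ m) p v =
      F (a p * b p) * (m * a p ^ (m - 1) * fderiv ℝ a p v)
        + a p ^ m * (deriv F (a p * b p) * (a p * fderiv ℝ b p v + b p * fderiv ℝ a p v)) := by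
  have hFab : HasFDerivAt (fun q => F (a q * b q))
      (deriv F (a p * b p) • (a p • fderiv ℝ b p + b p • fderiv ℝ a p)) p :=
    hF.hasDerivAt.comp_hasFDerivAt p (ha.hasFDerivAt.mul hb.hasFDerivAt)
  have hpow : HasFDerivAt (fun q => a q ^ m) ((m * a p ^ (m - 1)) • fderiv ℝ a p) p :=
    (hasDerivAt_pow m (a p)).comp_hasFDerivAt p ha.hasFDerivAt
  have hprod : HasFDerivAt (fun q => F (a q * b q) * a q ^ m) _ p := hFab.mul hpow
  rw [hprod.fderiv]
  simp only [FunLike.coe_add, FunLike.coe_smul, Pi.add_apply, Pi.smul_apply, smul_eq_mul]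

section ClearingDenominators

variable {x e₁ e₂ : ℝ}

theorem conservation_condition_one_mul_denom (k f₀ f₁ g₀ g₁ : ℝ) (hx : x ≠ 0)
    (hc : 2 * x * e₂ + e₁ ≠ 0)
    (h : x * f₁ + k * f₀ + (x * g₁ + (k - 1) * g₀) / (x * (4 * e₂ * x + 2 * e₁))
      - f₁ * x * (4 * e₂ * x + 4 * e₁) / (4 * e₂ * x + 2 * e₁) = 0) :
    2 * x ^ 2 * (2 * x * e₂ + e₁) * f₁ + 2 * x * (2 * x * e₂ + e₁) * k * f₀
      + x * g₁ + (k - 1) * g₀ - x ^ 2 * (4 * e₂ * x + 4 * e₁) * f₁ = 0 := by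
  generalize hd : 4 * e₂ * x + 2 * e₁ = d at h
  have hd0 : d ≠ 0 := by contrapose! hc; linarith
  field_simp at h
  subst hd
  linear_combination h

theorem conservation_condition_two_mul_denom (k f₁ g₀ g₁ : ℝ) (hx : x ≠ 0)
    (hc : 2 * x * e₂ + e₁ ≠ 0)
    (h : g₁ - (4 * e₂ * x + 4 * e₁) * (x * g₁ + (k - 1) * g₀) / (x * (4 * e₂ * x + 2 * e₁))
      + f₁ / (4 * e₂ * x + 2 * e₁) = 0) :
    2 * x * (2 * x * e₂ + e₁) * g₁ - (4 * e₂ * x + 4 * e₁) * (x * g₁ + (k - 1) * g₀)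
      + x * f₁ = 0 := by
  generalize hd : 4 * e₂ * x + 2 * e₁ = d at h
  have hd0 : d ≠ 0 := by contrapose! hc; linarith
  field_simp at h
  subst hd
  linear_combination h

theorem derivative_relation_mul_denom {s t u w z : ℝ} (hs : s ≠ 0)
    (hc : 2 * x * e₂ + e₁ ≠ 0)
    (h : u = 1 / s * (1 / (2 * (2 * e₂ * x + e₁))) * (w - 4 * (e₁ + e₂ * x) * t * z)) :
    2 * (2 * x * e₂ + e₁) * (s * u) = w - 4 * (e₁ + e₂ * x) * t * z := by
  generalize hd : 2 * e₂ * x + e₁ = d at h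
  have hd0 : d ≠ 0 := by contrapose! hc; linarith
  subst h hd
  field_simp

end ClearingDenominators

/-- Here `dpa, dma, dpb, dmb` stand for `∂₊a, ∂₋a, ∂₊b, ∂₋b` and `f₀, f₁, g₀, g₁, e₁, e₂` for
the values of `f, f′, g, g′, E′, E″` at `x`. -/
theorem current_divergence_eq_zero (k : ℕ) (hk : 1 ≤ k)
    {a b x dpa dma dpb dmb f₀ f₁ g₀ g₁ e₁ e₂ : ℝ} (hx : x = a * b) (ha : a ≠ 0) (hb : b ≠ 0)
    (hc : 2 * x * e₂ + e₁ ≠ 0)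
    (hi : 2 * x ^ 2 * (2 * x * e₂ + e₁) * f₁ + 2 * x * (2 * x * e₂ + e₁) * k * f₀
      + x * g₁ + (k - 1) * g₀ - x ^ 2 * (4 * e₂ * x + 4 * e₁) * f₁ = 0)
    (hii : 2 * x * (2 * x * e₂ + e₁) * g₁ - (4 * e₂ * x + 4 * e₁) * (x * g₁ + (k - 1) * g₀)
      + x * f₁ = 0)
    (hrel₁ : 2 * (2 * x * e₂ + e₁) * (a * dmb) = dpb - 4 * (e₁ + e₂ * x) * b * dma)
    (hrel₂ : 2 * (2 * x * e₂ + e₁) * (b * dpa) = dma - 4 * (e₁ + e₂ * x) * a * dpb) :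
    f₀ * (k * a ^ (k - 1) * dma) + a ^ k * (f₁ * (a * dmb + b * dma))
      + (g₀ * ((k - 1 : ℕ) * a ^ (k - 1 - 1) * dpa)
        + a ^ (k - 1) * (g₁ * (a * dpb + b * dpa))) = 0 := by
  obtain ⟨n, rfl⟩ := Nat.exists_eq_add_of_le' hk
  simp only [Nat.add_sub_cancel, Nat.cast_add, Nat.cast_one] at hi hii ⊢
  have hpow : a * (n * a ^ (n - 1)) = n * a ^ n := by
    rcases Nat.eq_zero_or_pos n with rfl | hn
    · simp
    · rw [mul_left_comm, mul_pow_sub_one hn.ne']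
  subst hx
  have key : 2 * (2 * (a * b) * e₂ + e₁) * a * b *
      (f₀ * ((n + 1) * a ^ n * dma) + a ^ (n + 1) * (f₁ * (a * dmb + b * dma))
        + (g₀ * (n * a ^ (n - 1) * dpa) + a ^ n * (g₁ * (a * dpb + b * dpa)))) = 0 := by
    linear_combination (a ^ n * dma) * hi + (a ^ n * a * dpb) * hii
      + (b * a ^ n * a ^ 2 * f₁) * hrel₁ + (a ^ n * (a * b * g₁ + n * g₀)) * hrel₂
      + (2 * (2 * (a * b) * e₂ + e₁) * b * g₀ * dpa) * hpow
  exact (mul_eq_zero.mp key).resolve_left (by positivity)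

theorem stmt8_general (k : ℕ) (hk : 1 ≤ k) (E f g : ℝ → ℝ)
    (hf : ContDiffOn ℝ 1 f (Set.Ioi 0)) (hg : ContDiffOn ℝ 1 g (Set.Ioi 0))
    (hode : ∀ x > (0 : ℝ), 2 * x * deriv (deriv E) x + deriv E x ≠ 0 →
      (x * deriv f x + (k : ℝ) * f x
          + (x * deriv g x + ((k : ℝ) - 1) * g x)
              / (x * (4 * deriv (deriv E) x * x + 2 * deriv E x))
          - deriv f x * x * (4 * deriv (deriv E) x * x + 4 * deriv E x)
              / (4 * deriv (deriv E) x * x + 2 * deriv E x) = 0) ∧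
      (deriv g x
          - (4 * deriv (deriv E) x * x + 4 * deriv E x)
              * (x * deriv g x + ((k : ℝ) - 1) * g x)
              / (x * (4 * deriv (deriv E) x * x + 2 * deriv E x))
          + deriv f x / (4 * deriv (deriv E) x * x + 2 * deriv E x) = 0))
    (a b : ℝ × ℝ → ℝ)
    (ha : ContDiff ℝ 1 a) (hb : ContDiff ℝ 1 b)
    (hapos : ∀ p : ℝ × ℝ, 0 < a p) (hbpos : ∀ p : ℝ × ℝ, 0 < b p)
    (hne : ∀ p : ℝ × ℝ,
      2 * (a p * b p) * deriv (deriv E) (a p * b p) + deriv E (a p * b p) ≠ 0)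
    (hrel1 : ∀ p : ℝ × ℝ,
      dminus b p =
        (1 / a p) *
          (1 / (2 * (2 * deriv (deriv E) (a p * b p) * (a p * b p)
              + deriv E (a p * b p)))) *
          (dplus b p
            - 4 * (deriv E (a p * b p)
                + deriv (deriv E) (a p * b p) * (a p * b p)) * b p * dminus a p))
    (hrel2 : ∀ p : ℝ × ℝ,
      dplus a p =
        (1 / b p) *
          (1 / (2 * (2 * deriv (deriv E) (a p * b p) * (a p * b p)
              + deriv E (a p * b p)))) *
          (dminus a p
            - 4 * (deriv E (a p * b p)
                + deriv (deriv E) (a p * b p) * (a p * b p)) * a p * dplus b p)) :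
    ∀ p : ℝ × ℝ,
      dminus (fun q => f (a q * b q) * a q ^ k) p
        + dplus (fun q => g (a q * b q) * a q ^ (k - 1)) p = 0 := by
  intro p
  have hx : 0 < a p * b p := mul_pos (hapos p) (hbpos p)
  have ha0 := (hapos p).ne'
  have hb0 := (hbpos p).ne'
  have hdiff {F : ℝ → ℝ} (hF : ContDiffOn ℝ 1 F (Set.Ioi 0)) :
      DifferentiableAt ℝ F (a p * b p) :=
    (hF.differentiableOn one_ne_zero).differentiableAt (Ioi_mem_nhds hx)
  have hda := ha.differentiable one_ne_zero p
  have hdb := hb.differentiable one_ne_zero p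
  obtain ⟨hi, hii⟩ := hode _ hx (hne p)
  rw [dminus, dplus, fderiv_comp_mul_mul_pow_apply hda hdb (hdiff hf),
    fderiv_comp_mul_mul_pow_apply hda hdb (hdiff hg)]
  exact current_divergence_eq_zero k hk rfl ha0 hb0 (hne p)
    (conservation_condition_one_mul_denom _ _ _ _ _ hx.ne' (hne p) hi)
    (conservation_condition_two_mul_denom _ _ _ _ hx.ne' (hne p) hii)
    (derivative_relation_mul_denom ha0 (hne p) (hrel1 p))
    (derivative_relation_mul_denom hb0 (hne p) (hrel2 p))

/-- Conservation of the even spin-`2k` current of a unified auxiliary-field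
sigma model with interaction function `E = E(ν₂)`:  writing `a = tr(v₊²)`,
`b = tr(v₋²)` and `x = a·b`, the ODE conditions on `(f, g)` together with the
derivative relations for `a, b` (which follow from the key identity) imply
`∂₋(f(ab)·aᵏ) + ∂₊(g(ab)·a^{k−1}) = 0`. -/
theorem stmt8 (k : ℕ) (hk : 1 ≤ k) (E f g : ℝ → ℝ)
    (hE : ContDiffOn ℝ 2 E (Set.Ioi 0))
    (hf : ContDiffOn ℝ 1 f (Set.Ioi 0)) (hg : ContDiffOn ℝ 1 g (Set.Ioi 0))
    (hode : ∀ x > (0 : ℝ), 2 * x * deriv (deriv E) x + deriv E x ≠ 0 →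
      (x * deriv f x + (k : ℝ) * f x
          + (x * deriv g x + ((k : ℝ) - 1) * g x)
              / (x * (4 * deriv (deriv E) x * x + 2 * deriv E x))
          - deriv f x * x * (4 * deriv (deriv E) x * x + 4 * deriv E x)
              / (4 * deriv (deriv E) x * x + 2 * deriv E x) = 0) ∧
      (deriv g x
          - (4 * deriv (deriv E) x * x + 4 * deriv E x)
              * (x * deriv g x + ((k : ℝ) - 1) * g x)
              / (x * (4 * deriv (deriv E) x * x + 2 * deriv E x))
          + deriv f x / (4 * deriv (deriv E) x * x + 2 * deriv E x) = 0))
    (a b : ℝ × ℝ → ℝ)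
    (ha : ContDiff ℝ 1 a) (hb : ContDiff ℝ 1 b)
    (hapos : ∀ p : ℝ × ℝ, 0 < a p) (hbpos : ∀ p : ℝ × ℝ, 0 < b p)
    (hne : ∀ p : ℝ × ℝ,
      2 * (a p * b p) * deriv (deriv E) (a p * b p) + deriv E (a p * b p) ≠ 0)
    (hrel1 : ∀ p : ℝ × ℝ,
      dminus b p =
        (1 / a p) *
          (1 / (2 * (2 * deriv (deriv E) (a p * b p) * (a p * b p)
              + deriv E (a p * b p)))) *
          (dplus b p
            - 4 * (deriv E (a p * b p)
                + deriv (deriv E) (a p * b p) * (a p * b p)) * b p * dminus a p))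
    (hrel2 : ∀ p : ℝ × ℝ,
      dplus a p =
        (1 / b p) *
          (1 / (2 * (2 * deriv (deriv E) (a p * b p) * (a p * b p)
              + deriv E (a p * b p)))) *
          (dminus a p
            - 4 * (deriv E (a p * b p)
                + deriv (deriv E) (a p * b p) * (a p * b p)) * a p * dplus b p)) :
    ∀ p : ℝ × ℝ,
      dminus (fun q => f (a q * b q) * a q ^ k) p
        + dplus (fun q => g (a q * b q) * a q ^ (k - 1)) p = 0 :=
  stmt8_general k hk E f g hf hg hode a b ha hb hapos hbpos hne hrel1 hrel2
end

section
/- Let k ≥ 1 be an integer and let E, f, g : (0,∞) → ℝ with E twice continuously differentiable, E″(ν) ≠ 0 for all ν > 0, and f, g continuously differentiable, satisfying for all ν > 0: ν f′(ν) + 2k f(ν) + (ν g′(ν) + (2k−2) g(ν))/(ν² E″(ν)) − f′(ν)(E′(ν) + ν E″(ν))/E″(ν) = 0 and g′(ν) − (E′(ν) + ν E″(ν))(ν g′(ν) + (2k−2) g(ν))/(ν² E″(ν)) + f′(ν)/E″(ν) = 0. Define Ê, f̂, ĝ : (0,∞) → ℝ by Ê(x) = E(√x), f̂(x) = f(√x),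 ĝ(x) = g(√x). Then 4xÊ″(x) + 2Ê′(x) = E″(√x) ≠ 0 for all x > 0, and Ê, f̂, ĝ satisfy for all x > 0: x f̂′(x) + k f̂(x) + (x ĝ′(x) + (k−1) ĝ(x))/(x(4Ê″(x)x + 2Ê′(x))) − f̂′(x)·x·(4Ê″(x)x + 4Ê′(x))/(4Ê″(x)x + 2Ê′(x)) = 0 and ĝ′(x) − (4Ê″(x)x + 4Ê′(x))(x ĝ′(x) + (k−1) ĝ(x))/(x(4Ê″(x)x + 2Ê′(x))) + f̂′(x)/(4Ê″(x)x + 2Ê′(x)) = 0. -/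
/-!
Writing `x = ν²`, the chain rule through `√` gives `Ê'(ν²) = E'(ν) / (2ν)` and
`Ê''(ν²) = (ν E''(ν) - E'(ν)) / (4ν³)`, so `4xÊ'' + 2Ê' = E''(ν)` and
`4xÊ'' + 4Ê' = E''(ν) + E'(ν)/ν`; likewise `f̂'(ν²) = f'(ν)/(2ν)`, `ĝ'(ν²) = g'(ν)/(2ν)`.
After this substitution the two hatted equations are the free-boson equations at `ν`
multiplied by `1/2` and `1/(2ν)` respectively.
-/

open Set Filter Topology

lemma hasDerivAt_comp_sqrt_sq {u : ℝ → ℝ} {u' ν : ℝ} (hν : 0 < ν) (hu : HasDerivAt u u' ν) :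
    HasDerivAt (fun y => u (Real.sqrt y)) (u' / (2 * ν)) (ν ^ 2) := by
  have hsqrt := Real.hasDerivAt_sqrt (pow_pos hν 2).ne'
  rw [Real.sqrt_sq hν.le] at hsqrt
  rw [← Real.sqrt_sq hν.le] at hu
  exact (hu.comp (ν ^ 2) hsqrt).congr_deriv (by ring)

lemma deriv_comp_sqrt_sq {u : ℝ → ℝ} {ν : ℝ} (hν : 0 < ν) (hu : DifferentiableAt ℝ u ν) :
    deriv (fun y => u (Real.sqrt y)) (ν ^ 2) = deriv u ν / (2 * ν) :=
  (hasDerivAt_comp_sqrt_sq hν hu.hasDerivAt).deriv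

lemma deriv_deriv_comp_sqrt_sq {u : ℝ → ℝ} {ν : ℝ} (hν : 0 < ν)
    (hu : DifferentiableOn ℝ u (Ioi 0)) (hu' : DifferentiableAt ℝ (deriv u) ν) :
    deriv (deriv fun y => u (Real.sqrt y)) (ν ^ 2)
      = (ν * deriv (deriv u) ν - deriv u ν) / (4 * ν ^ 3) := by
  have hderiv : deriv (fun y => u (Real.sqrt y)) =ᶠ[𝓝 (ν ^ 2)]
      fun y => (fun t => deriv u t / (2 * t)) (Real.sqrt y) := by
    filter_upwards [Ioi_mem_nhds (pow_pos hν 2)] with y hy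
    have hy' : 0 < Real.sqrt y := Real.sqrt_pos.2 hy
    have := deriv_comp_sqrt_sq hy' (hu.differentiableAt (Ioi_mem_nhds hy'))
    rwa [Real.sq_sqrt hy.le] at this
  have hquot : HasDerivAt (fun t => deriv u t / (2 * t))
      ((deriv (deriv u) ν * (2 * ν) - deriv u ν * 2) / (2 * ν) ^ 2) ν := by
    have h2 : HasDerivAt (fun t : ℝ => 2 * t) 2 ν := by
      simpa using (hasDerivAt_id ν).const_mul (2 : ℝ)
    exact hu'.hasDerivAt.div h2 (by positivity)
  rw [hderiv.deriv_eq, (hasDerivAt_comp_sqrt_sq hν hquot).deriv]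
  field_simp
  ring

theorem stmt9_general (k : ℕ) (E f g : ℝ → ℝ)
    (hE : ContDiffOn ℝ 2 E (Set.Ioi 0))
    (hE'' : ∀ ν > (0 : ℝ), deriv (deriv E) ν ≠ 0)
    (hf : ContDiffOn ℝ 1 f (Set.Ioi 0)) (hg : ContDiffOn ℝ 1 g (Set.Ioi 0))
    (hode1 : ∀ ν > (0 : ℝ),
      ν * deriv f ν + (2 * (k : ℝ)) * f ν
        + (ν * deriv g ν + (2 * (k : ℝ) - 2) * g ν) / (ν ^ 2 * deriv (deriv E) ν)
        - deriv f ν * (deriv E ν + ν * deriv (deriv E) ν) / deriv (deriv E) ν = 0)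
    (hode2 : ∀ ν > (0 : ℝ),
      deriv g ν
        - (deriv E ν + ν * deriv (deriv E) ν)
            * (ν * deriv g ν + (2 * (k : ℝ) - 2) * g ν)
            / (ν ^ 2 * deriv (deriv E) ν)
        + deriv f ν / deriv (deriv E) ν = 0)
    (hatE hatf hatg : ℝ → ℝ)
    (hhatE : hatE = fun x => E (Real.sqrt x))
    (hhatf : hatf = fun x => f (Real.sqrt x))
    (hhatg : hatg = fun x => g (Real.sqrt x)) :
    ∀ x > (0 : ℝ),
      (4 * x * deriv (deriv hatE) x + 2 * deriv hatE x
          = deriv (deriv E) (Real.sqrt x) ∧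
        deriv (deriv E) (Real.sqrt x) ≠ 0) ∧
      (x * deriv hatf x + (k : ℝ) * hatf x
          + (x * deriv hatg x + ((k : ℝ) - 1) * hatg x)
              / (x * (4 * deriv (deriv hatE) x * x + 2 * deriv hatE x))
          - deriv hatf x * x * (4 * deriv (deriv hatE) x * x + 4 * deriv hatE x)
              / (4 * deriv (deriv hatE) x * x + 2 * deriv hatE x) = 0) ∧
      (deriv hatg x
          - (4 * deriv (deriv hatE) x * x + 4 * deriv hatE x)
              * (x * deriv hatg x + ((k : ℝ) - 1) * hatg x)
              / (x * (4 * deriv (deriv hatE) x * x + 2 * deriv hatE x))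
          + deriv hatf x / (4 * deriv (deriv hatE) x * x + 2 * deriv hatE x)
            = 0) := by
  intro x hx
  obtain ⟨ν, hν, rfl⟩ : ∃ ν > 0, x = ν ^ 2 :=
    ⟨Real.sqrt x, Real.sqrt_pos.2 hx, (Real.sq_sqrt hx.le).symm⟩
  have hνnhds : Ioi (0 : ℝ) ∈ 𝓝 ν := Ioi_mem_nhds hν
  have hEdiff : DifferentiableOn ℝ E (Ioi 0) := hE.differentiableOn two_ne_zero
  have hE'diff : DifferentiableAt ℝ (deriv E) ν :=
    ((hE.deriv_of_isOpen isOpen_Ioi le_rfl).contDiffAt hνnhds).differentiableAt one_ne_zero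
  subst hhatE hhatf hhatg
  rw [deriv_deriv_comp_sqrt_sq hν hEdiff hE'diff, deriv_comp_sqrt_sq hν (hEdiff.differentiableAt hνnhds),
    deriv_comp_sqrt_sq hν ((hf.contDiffAt hνnhds).differentiableAt one_ne_zero),
    deriv_comp_sqrt_sq hν ((hg.contDiffAt hνnhds).differentiableAt one_ne_zero)]
  simp only [Real.sqrt_sq hν.le]
  have hE''ν := hE'' ν hν
  have h1 := hode1 ν hν
  have h2 := hode2 ν hν
  refine ⟨⟨by field_simp; ring, hE''ν⟩, ?_, ?_⟩
  · linear_combination (norm := skip) h1 / 2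
    field_simp
    ring
  · linear_combination (norm := skip) h2 / (2 * ν)
    field_simp
    ring

/-- The substitution `ν ↦ √ν₂` maps the free-boson conservation system for
spin `n = 2k` onto the even-spin system of general auxiliary-field sigma
models with interaction function depending only on `ν₂`. -/
theorem stmt9 (k : ℕ) (hk : 1 ≤ k) (E f g : ℝ → ℝ)
    (hE : ContDiffOn ℝ 2 E (Set.Ioi 0))
    (hE'' : ∀ ν > (0 : ℝ), deriv (deriv E) ν ≠ 0)
    (hf : ContDiffOn ℝ 1 f (Set.Ioi 0)) (hg : ContDiffOn ℝ 1 g (Set.Ioi 0))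
    (hode1 : ∀ ν > (0 : ℝ),
      ν * deriv f ν + (2 * (k : ℝ)) * f ν
        + (ν * deriv g ν + (2 * (k : ℝ) - 2) * g ν) / (ν ^ 2 * deriv (deriv E) ν)
        - deriv f ν * (deriv E ν + ν * deriv (deriv E) ν) / deriv (deriv E) ν = 0)
    (hode2 : ∀ ν > (0 : ℝ),
      deriv g ν
        - (deriv E ν + ν * deriv (deriv E) ν)
            * (ν * deriv g ν + (2 * (k : ℝ) - 2) * g ν)
            / (ν ^ 2 * deriv (deriv E) ν)
        + deriv f ν / deriv (deriv E) ν = 0)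
    (hatE hatf hatg : ℝ → ℝ)
    (hhatE : hatE = fun x => E (Real.sqrt x))
    (hhatf : hatf = fun x => f (Real.sqrt x))
    (hhatg : hatg = fun x => g (Real.sqrt x)) :
    ∀ x > (0 : ℝ),
      (4 * x * deriv (deriv hatE) x + 2 * deriv hatE x
          = deriv (deriv E) (Real.sqrt x) ∧
        deriv (deriv E) (Real.sqrt x) ≠ 0) ∧
      (x * deriv hatf x + (k : ℝ) * hatf x
          + (x * deriv hatg x + ((k : ℝ) - 1) * hatg x)
              / (x * (4 * deriv (deriv hatE) x * x + 2 * deriv hatE x))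
          - deriv hatf x * x * (4 * deriv (deriv hatE) x * x + 4 * deriv hatE x)
              / (4 * deriv (deriv hatE) x * x + 2 * deriv hatE x) = 0) ∧
      (deriv hatg x
          - (4 * deriv (deriv hatE) x * x + 4 * deriv hatE x)
              * (x * deriv hatg x + ((k : ℝ) - 1) * hatg x)
              / (x * (4 * deriv (deriv hatE) x * x + 2 * deriv hatE x))
          + deriv hatf x / (4 * deriv (deriv hatE) x * x + 2 * deriv hatE x)
            = 0) :=
  stmt9_general k E f g hE hE'' hf hg hode1 hode2 hatE hatf hatg hhatE hhatf hhatg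
end

section
/- Let n ∈ ℝ and let ε, φ, γ : ℕ → ℝ be sequences with γ₀ = 0. Define ε̃ₐ := (1 + (n−1)(a+1))·εₐ for all a ∈ ℕ. Suppose that for every integer k ≥ 1: (k+1)γₖ = −n·k·φ₀·ε̃_{k−1} + Σ_{b=1}^{k−1} (1 − n(k−b)/b)·b·φ_b·ε̃_{k−1−b} and k·φₖ = Σ_{b=1}^{k−1} (1 + (n−2)(k−b)/(b+1))·(b+1)·γ_b·ε̃_{k−1−b}. Then for every integer k ≥ 1: (k+1)γₖ = −n·k·φ₀·ε̃_{k−1} + Σ_{b=1}^{k−1} Σ_{c=1}^{b−1} (1 − n(k−b)/b)·(1 + (n−2)(b−c)/(c+1))·(c+1)·γ_c·ε̃_{k−1−b}·ε̃_{b−1−c} and k·φₖ = −n·φ₀·Σ_{b=1}^{k−1} b·(1 + (n−2)(k−b)/(b+1))·ε̃_{k−1−b}·ε̃_{b−1} + Σ_{b=1}^{k−1} Σ_{c=1}^{b−1} (1 + (n−2)(k−b)/(b+1))·(1 − n(b−c)/c)·c·φ_c·ε̃_{k−1−b}·ε̃_{b−1−c}. -/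
/-- The coupled order-by-order relations (3.44) of the perturbative
Smirnov–Zamolodchikov analysis imply the decoupled recursions (3.45) for the
coefficients `γₖ` and `φₖ`. -/
theorem stmt10 (n : ℝ) (ε φ γ : ℕ → ℝ) (hγ0 : γ 0 = 0)
    (εt : ℕ → ℝ) (hεt : ∀ a : ℕ, εt a = (1 + (n - 1) * ((a : ℝ) + 1)) * ε a)
    (h1 : ∀ k : ℕ, 1 ≤ k →
      ((k : ℝ) + 1) * γ k =
        -(n * (k : ℝ) * φ 0 * εt (k - 1)) +
          ∑ b ∈ Finset.Icc 1 (k - 1),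
            (1 - n * ((k : ℝ) - (b : ℝ)) / (b : ℝ)) * (b : ℝ) * φ b
              * εt (k - 1 - b))
    (h2 : ∀ k : ℕ, 1 ≤ k →
      (k : ℝ) * φ k =
        ∑ b ∈ Finset.Icc 1 (k - 1),
          (1 + (n - 2) * ((k : ℝ) - (b : ℝ)) / ((b : ℝ) + 1)) * ((b : ℝ) + 1)
            * γ b * εt (k - 1 - b)) :
    ∀ k : ℕ, 1 ≤ k →
      (((k : ℝ) + 1) * γ k =
        -(n * (k : ℝ) * φ 0 * εt (k - 1)) +
          ∑ b ∈ Finset.Icc 1 (k - 1), ∑ c ∈ Finset.Icc 1 (b - 1),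
            (1 - n * ((k : ℝ) - (b : ℝ)) / (b : ℝ))
              * (1 + (n - 2) * ((b : ℝ) - (c : ℝ)) / ((c : ℝ) + 1))
              * ((c : ℝ) + 1) * γ c * εt (k - 1 - b) * εt (b - 1 - c)) ∧
      ((k : ℝ) * φ k =
        -(n * φ 0 *
            ∑ b ∈ Finset.Icc 1 (k - 1),
              (b : ℝ) * (1 + (n - 2) * ((k : ℝ) - (b : ℝ)) / ((b : ℝ) + 1))
                * εt (k - 1 - b) * εt (b - 1)) +
          ∑ b ∈ Finset.Icc 1 (k - 1), ∑ c ∈ Finset.Icc 1 (b - 1),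
            (1 + (n - 2) * ((k : ℝ) - (b : ℝ)) / ((b : ℝ) + 1))
              * (1 - n * ((b : ℝ) - (c : ℝ)) / (c : ℝ))
              * (c : ℝ) * φ c * εt (k - 1 - b) * εt (b - 1 - c)) := by

  intro k hk
  constructor
  · rw [h1 k hk]
    congr 1
    apply Finset.sum_congr rfl
    intro b hb
    have hb1 : 1 ≤ b := (Finset.mem_Icc.mp hb).1
    have : (1 - n * ((k : ℝ) - (b : ℝ)) / (b : ℝ)) * (b : ℝ) * φ b * εt (k - 1 - b)
        = (1 - n * ((k : ℝ) - (b : ℝ)) / (b : ℝ)) * ((b : ℝ) * φ b) * εt (k - 1 - b) := by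
      ring
    rw [this, h2 b hb1, Finset.mul_sum, Finset.sum_mul]
    apply Finset.sum_congr rfl
    intro c hc
    ring
  · rw [h2 k hk]
    have key : ∀ b ∈ Finset.Icc 1 (k - 1),
        (1 + (n - 2) * ((k : ℝ) - (b : ℝ)) / ((b : ℝ) + 1)) * ((b : ℝ) + 1)
            * γ b * εt (k - 1 - b)
        = (-(n * φ 0) * ((b : ℝ) * (1 + (n - 2) * ((k : ℝ) - (b : ℝ)) / ((b : ℝ) + 1))
                * εt (k - 1 - b) * εt (b - 1)))
          + ∑ c ∈ Finset.Icc 1 (b - 1),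
            (1 + (n - 2) * ((k : ℝ) - (b : ℝ)) / ((b : ℝ) + 1))
              * (1 - n * ((b : ℝ) - (c : ℝ)) / (c : ℝ))
              * (c : ℝ) * φ c * εt (k - 1 - b) * εt (b - 1 - c) := by
      intro b hb
      have hb1 : 1 ≤ b := (Finset.mem_Icc.mp hb).1
      have hbg : (1 + (n - 2) * ((k : ℝ) - (b : ℝ)) / ((b : ℝ) + 1)) * ((b : ℝ) + 1)
            * γ b * εt (k - 1 - b)
          = (1 + (n - 2) * ((k : ℝ) - (b : ℝ)) / ((b : ℝ) + 1))
            * (((b : ℝ) + 1) * γ b) * εt (k - 1 - b) := by ring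
      rw [hbg, h1 b hb1, mul_add, add_mul]
      congr 1
      · ring
      · rw [Finset.mul_sum, Finset.sum_mul]
        apply Finset.sum_congr rfl
        intro c hc
        ring
    rw [Finset.sum_congr rfl key, Finset.sum_add_distrib, ← Finset.mul_sum]
    congr 1
    ring
end

section
/- Let λ > 0, let n be a real number with n ≠ 2, let c₁, c₂ ∈ ℝ, and let J ⊆ (0,∞) be a nonempty open interval with λν ≠ 1 for all ν ∈ J. Define E(ν) = (1/λ)·log(λν), f(ν) = c₁ + c₂(λν)^{−n}, and g(ν) = (n/(n−2))·(1/λ)·(c₁ + c₂(λν)^{2−n}). Then E′(ν)² ≠ 1 on J and (f, g) satisfies for all ν ∈ J: f′(ν) = nE′(ν)E″(ν)/(E′(ν)²−1) · f(ν) − (n−2)E″(ν)/(ν(E′(ν)²−1)) · g(ν) and g′(ν) = nνE″(ν)/(E′(ν)²−1) · f(ν) − (n−2)(E′(ν)²−1+νE′(ν)E″(ν))/(ν(E′(ν)²−1)) · g(ν). -/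
/-!
With `E = λ⁻¹ log(λν)` one has `E' = (λν)⁻¹` and `E'' = -(λν²)⁻¹`, and every power satisfies
`d/dν (λν)^p = p (λν)^p / ν`. Writing `(λν)^{2-n} = (λν)² (λν)^{-n}`, both equations of the system
become rational identities in `λ`, `ν` and `(λν)^{-n}`, whose denominators `λ`, `ν`, `n - 2` and
`1 - (λν)²` do not vanish; the last one is `E'² - 1` up to the factor `(λν)²`.
-/

open Real

lemma deriv_inv_mul_log_const_mul {lam : ℝ} (hlam : lam ≠ 0) :
    deriv (fun ν => (1 / lam) * log (lam * ν)) = fun ν => (lam * ν)⁻¹ := by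
  funext ν
  rw [deriv_const_mul_field']
  beta_reduce
  rw [deriv_comp_mul_left (f := log), deriv_log, smul_eq_mul]
  field_simp

lemma deriv_inv_const_mul (lam : ℝ) :
    deriv (fun ν : ℝ => (lam * ν)⁻¹) = fun ν => -(lam * ν ^ 2)⁻¹ := by
  funext ν
  simp_rw [mul_inv]
  rw [deriv_const_mul_field']
  simp only [deriv_inv', mul_neg]

lemma hasDerivAt_const_mul_rpow {lam x : ℝ} (hx : lam * x ≠ 0) (p : ℝ) :
    HasDerivAt (fun y => (lam * y) ^ p) (p * (lam * x) ^ p / x) x := by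
  have hlin : HasDerivAt (fun y => lam * y) lam x := by
    simpa using (hasDerivAt_id x).const_mul lam
  convert hlin.rpow_const (p := p) (Or.inl hx) using 1
  rw [rpow_sub_one hx]
  field_simp [left_ne_zero_of_mul hx, right_ne_zero_of_mul hx]

theorem stmt14_general (lam : ℝ) (hlam : 0 < lam) (n : ℝ) (hn : n ≠ 2) (c₁ c₂ : ℝ)
    (J : Set ℝ) (hJss : J ⊆ Set.Ioi (0 : ℝ))
    (hJ1 : ∀ ν ∈ J, lam * ν ≠ 1)
    (E f g : ℝ → ℝ)
    (hEdef : E = fun ν => (1 / lam) * Real.log (lam * ν))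
    (hfdef : f = fun ν => c₁ + c₂ * (lam * ν) ^ (-n))
    (hgdef : g = fun ν =>
      (n / (n - 2)) * (1 / lam) * (c₁ + c₂ * (lam * ν) ^ (2 - n))) :
    ∀ ν ∈ J,
      (deriv E ν) ^ 2 ≠ 1 ∧
      deriv f ν =
        n * deriv E ν * deriv (deriv E) ν / ((deriv E ν) ^ 2 - 1) * f ν
          - (n - 2) * deriv (deriv E) ν / (ν * ((deriv E ν) ^ 2 - 1)) * g ν ∧
      deriv g ν =
        n * ν * deriv (deriv E) ν / ((deriv E ν) ^ 2 - 1) * f ν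
          - (n - 2) * ((deriv E ν) ^ 2 - 1 + ν * deriv E ν * deriv (deriv E) ν)
              / (ν * ((deriv E ν) ^ 2 - 1)) * g ν := by
  intro ν hν
  have hν0 : 0 < ν := hJss hν
  have hu : 0 < lam * ν := mul_pos hlam hν0
  have hE' : deriv E = fun x => (lam * x)⁻¹ := hEdef ▸ deriv_inv_mul_log_const_mul hlam.ne'
  have hE1 : deriv E ν = (lam * ν)⁻¹ := by rw [hE']
  have hE2 : deriv (deriv E) ν = -(lam * ν ^ 2)⁻¹ := by rw [hE', deriv_inv_const_mul]
  have hf' : deriv f ν = c₂ * (-n * (lam * ν) ^ (-n) / ν) := by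
    rw [hfdef]
    exact (((hasDerivAt_const_mul_rpow hu.ne' _).const_mul c₂).const_add c₁).deriv
  have hg' :
      deriv g ν = n / (n - 2) * (1 / lam) * (c₂ * ((2 - n) * (lam * ν) ^ (2 - n) / ν)) := by
    rw [hgdef]
    exact ((((hasDerivAt_const_mul_rpow hu.ne' _).const_mul c₂).const_add c₁).const_mul _).deriv
  have hpow : (lam * ν) ^ (2 - n) = (lam * ν) ^ 2 * (lam * ν) ^ (-n) := by
    rw [sub_eq_add_neg, rpow_add hu, rpow_two]
  have hsq : (lam * ν)⁻¹ ^ 2 ≠ 1 := by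
    rw [Ne, pow_eq_one_iff_of_nonneg (by positivity) two_ne_zero, inv_eq_one]
    exact hJ1 ν hν
  have hden : 1 - lam ^ 2 * ν ^ 2 ≠ 0 := by
    contrapose! hsq
    rw [inv_pow, mul_pow, ← sub_eq_zero.1 hsq, inv_one]
  have hn2 : n - 2 ≠ 0 := sub_ne_zero.2 hn
  rw [hf', hg', hE2, hE1]
  simp only [hfdef, hgdef, hpow]
  refine ⟨hsq, ?_, ?_⟩ <;> field_simp <;> ring

/-- The non-analytic logarithmic solution (A.7): for `E(ν) = (1/λ)log(λν)`,
the functions `f(ν) = c₁ + c₂(λν)^{−n}` and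
`g(ν) = (n/(n−2))(1/λ)(c₁ + c₂(λν)^{2−n})` solve the spin-`n` current
system in normal form. -/
theorem stmt14 (lam : ℝ) (hlam : 0 < lam) (n : ℝ) (hn : n ≠ 2) (c₁ c₂ : ℝ)
    (J : Set ℝ) (hJss : J ⊆ Set.Ioi (0 : ℝ)) (hJopen : IsOpen J)
    (hJconn : J.OrdConnected) (hJne : J.Nonempty)
    (hJ1 : ∀ ν ∈ J, lam * ν ≠ 1)
    (E f g : ℝ → ℝ)
    (hEdef : E = fun ν => (1 / lam) * Real.log (lam * ν))
    (hfdef : f = fun ν => c₁ + c₂ * (lam * ν) ^ (-n))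
    (hgdef : g = fun ν =>
      (n / (n - 2)) * (1 / lam) * (c₁ + c₂ * (lam * ν) ^ (2 - n))) :
    ∀ ν ∈ J,
      (deriv E ν) ^ 2 ≠ 1 ∧
      deriv f ν =
        n * deriv E ν * deriv (deriv E) ν / ((deriv E ν) ^ 2 - 1) * f ν
          - (n - 2) * deriv (deriv E) ν / (ν * ((deriv E ν) ^ 2 - 1)) * g ν ∧
      deriv g ν =
        n * ν * deriv (deriv E) ν / ((deriv E ν) ^ 2 - 1) * f ν
          - (n - 2) * ((deriv E ν) ^ 2 - 1 + ν * deriv E ν * deriv (deriv E) ν)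
              / (ν * ((deriv E ν) ^ 2 - 1)) * g ν :=
  stmt14_general lam hlam n hn c₁ c₂ J hJss hJ1 E f g hEdef hfdef hgdef
end

section
/- Let n be a real number with n ≠ 0 and n ≠ 2, let c₁, c₂ be nonzero real numbers, let J ⊆ (0,∞) be a nonempty open interval, and let E : J → ℝ be twice continuously differentiable with 0 < 1 − E′(ν)² for all ν ∈ J. Suppose f, g : J → ℝ are continuously differentiable and satisfy for all ν ∈ J: f′(ν) = nE′(ν)E″(ν)/(E′(ν)²−1)·f(ν) − (n−2)E″(ν)/(ν(E′(ν)²−1))·g(ν) and g′(ν) = nνE″(ν)/(E′(ν)²−1)·f(ν) − (n−2)(E′(ν)²−1+νE′(ν)E″(ν))/(ν(E′(ν)²−1))·g(ν). Define F(ν) = (c₁/(n−2))·(1−E′(ν)²)^{−n/2}·f(ν) and G(ν) = −(c₂/n)·ν^{n−2}·(1−E′(ν)²)^{n/2−1}·g(ν). Then for all ν ∈ J: F′(ν) = −(c₁/c₂)·n·ν^{1−n}·E″(ν)·(1−E′(ν)²)^{−n}·G(ν) and G′(ν) = (c₂/c₁)·(n−2)·ν^{n−1}·E″(ν)·(1−E′(ν)²)^{n−2}·F(ν).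 -/
/-!
`(1 - E′²)^{-n/2}` is an integrating factor for the `f`-term of the first equation: its logarithmic
derivative `n E′E″/(1 - E′²)` cancels that term, so `F′` only sees `g`. Likewise the logarithmic
derivative `(n - 2)(1/ν + E′E″/(E′² - 1))` of `ν^{n-2}(1 - E′²)^{n/2-1}` cancels the `g`-term of the
second equation, so `G′` only sees `f`. What remains are identities between real powers, which
become rational identities once every power is written through `(1 - E′²)^{n/2}` and `ν^n`.
-/

open Real

theorem HasDerivAt.rpow_const_mul_of_pos {u f : ℝ → ℝ} {u' f' x : ℝ} (hu : HasDerivAt u u' x)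
    (hux : 0 < u x) (hf : HasDerivAt f f' x) (s : ℝ) :
    HasDerivAt (fun y => u y ^ s * f y) (u x ^ s * (f' + s * u' / u x * f x)) x := by
  refine ((hu.rpow_const (p := s) (Or.inl hux.ne')).mul hf).congr_deriv ?_
  rw [rpow_sub_one hux.ne']
  field_simp
  ring

theorem HasDerivAt.one_sub_sq {u : ℝ → ℝ} {u' x : ℝ} (hu : HasDerivAt u u' x) :
    HasDerivAt (fun y => 1 - u y ^ 2) (-2 * u x * u') x :=
  ((hu.pow 2).const_sub 1).congr_deriv (by ring)

theorem rpow_eq_rpow_half_sq {x : ℝ} (hx : 0 ≤ x) (n : ℝ) : x ^ n = (x ^ (n / 2)) ^ 2 := by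
  rw [← rpow_mul_natCast hx]
  ring_nf

section IntegratingFactor

variable {n c₁ c₂ a b ν f g f' g' : ℝ}

theorem integratingFactor_fst (hn0 : n ≠ 0) (hn2 : n ≠ 2) (hc₂ : c₂ ≠ 0)
    (ha : 0 < 1 - a ^ 2) (hν : 0 < ν)
    (hf' : f' = n * a * b / (a ^ 2 - 1) * f - (n - 2) * b / (ν * (a ^ 2 - 1)) * g) :
    c₁ / (n - 2) * ((1 - a ^ 2) ^ (-n / 2) * (f' + -n / 2 * (-2 * a * b) / (1 - a ^ 2) * f))
      = -(c₁ / c₂) * n * ν ^ (1 - n) * b * (1 - a ^ 2) ^ (-n)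
          * (-(c₂ / n) * ν ^ (n - 2) * (1 - a ^ 2) ^ (n / 2 - 1) * g) := by
  have hq : 0 < (1 - a ^ 2) ^ (n / 2) := rpow_pos_of_pos ha _
  have hm : 0 < ν ^ n := rpow_pos_of_pos hν _
  have ha' : a ^ 2 - 1 ≠ 0 := by linarith
  have hn2' : n - 2 ≠ 0 := sub_ne_zero.mpr hn2
  subst hf'
  simp only [neg_div, rpow_neg ha.le, rpow_sub ha, rpow_sub hν, rpow_one, rpow_two,
    rpow_eq_rpow_half_sq ha.le n]
  field_simp
  ring

theorem integratingFactor_snd (hn0 : n ≠ 0) (hn2 : n ≠ 2) (hc₁ : c₁ ≠ 0)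
    (ha : 0 < 1 - a ^ 2) (hν : 0 < ν)
    (hg' : g' = n * ν * b / (a ^ 2 - 1) * f
      - (n - 2) * (a ^ 2 - 1 + ν * a * b) / (ν * (a ^ 2 - 1)) * g) :
    -(c₂ / n) * (ν ^ (n - 2) * ((1 - a ^ 2) ^ (n / 2 - 1)
        * (g' + (n / 2 - 1) * (-2 * a * b) / (1 - a ^ 2) * g)
      + (n - 2) * 1 / ν * ((1 - a ^ 2) ^ (n / 2 - 1) * g)))
      = (c₂ / c₁) * (n - 2) * ν ^ (n - 1) * b * (1 - a ^ 2) ^ (n - 2)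
          * (c₁ / (n - 2) * (1 - a ^ 2) ^ (-n / 2) * f) := by
  have hq : 0 < (1 - a ^ 2) ^ (n / 2) := rpow_pos_of_pos ha _
  have hm : 0 < ν ^ n := rpow_pos_of_pos hν _
  have ha' : a ^ 2 - 1 ≠ 0 := by linarith
  have hn2' : n - 2 ≠ 0 := sub_ne_zero.mpr hn2
  subst hg'
  simp only [neg_div, rpow_neg ha.le, rpow_sub ha, rpow_sub hν, rpow_one, rpow_two,
    rpow_eq_rpow_half_sq ha.le n]
  field_simp
  ring

end IntegratingFactor

theorem stmt15_general (n : ℝ) (hn0 : n ≠ 0) (hn2 : n ≠ 2)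
    (c₁ c₂ : ℝ) (hc₁ : c₁ ≠ 0) (hc₂ : c₂ ≠ 0)
    (J : Set ℝ) (hJss : J ⊆ Set.Ioi (0 : ℝ)) (hJopen : IsOpen J)
    (E : ℝ → ℝ) (hE : ContDiffOn ℝ 2 E J)
    (hE' : ∀ ν ∈ J, 0 < 1 - (deriv E ν) ^ 2)
    (f g : ℝ → ℝ) (hf : ContDiffOn ℝ 1 f J) (hg : ContDiffOn ℝ 1 g J)
    (hode1 : ∀ ν ∈ J,
      deriv f ν =
        n * deriv E ν * deriv (deriv E) ν / ((deriv E ν) ^ 2 - 1) * f ν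
          - (n - 2) * deriv (deriv E) ν / (ν * ((deriv E ν) ^ 2 - 1)) * g ν)
    (hode2 : ∀ ν ∈ J,
      deriv g ν =
        n * ν * deriv (deriv E) ν / ((deriv E ν) ^ 2 - 1) * f ν
          - (n - 2) * ((deriv E ν) ^ 2 - 1 + ν * deriv E ν * deriv (deriv E) ν)
              / (ν * ((deriv E ν) ^ 2 - 1)) * g ν)
    (F G : ℝ → ℝ)
    (hFdef : F = fun ν =>
      (c₁ / (n - 2)) * (1 - (deriv E ν) ^ 2) ^ (-n / 2) * f ν)
    (hGdef : G = fun ν =>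
      -(c₂ / n) * ν ^ (n - 2) * (1 - (deriv E ν) ^ 2) ^ (n / 2 - 1) * g ν) :
    ∀ ν ∈ J,
      deriv F ν =
        -(c₁ / c₂) * n * ν ^ (1 - n) * deriv (deriv E) ν
          * (1 - (deriv E ν) ^ 2) ^ (-n) * G ν ∧
      deriv G ν =
        (c₂ / c₁) * (n - 2) * ν ^ (n - 1) * deriv (deriv E) ν
          * (1 - (deriv E ν) ^ 2) ^ (n - 2) * F ν := by
  intro ν hν
  have hν0 : 0 < ν := hJss hν
  have hasDerivAt_of_C1 {h : ℝ → ℝ} (hh : ContDiffOn ℝ 1 h J) : HasDerivAt h (deriv h ν) ν :=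
    ((hh.differentiableOn one_ne_zero).differentiableAt (hJopen.mem_nhds hν)).hasDerivAt
  have hP := (hasDerivAt_of_C1 (hE.deriv_of_isOpen hJopen (by norm_num))).one_sub_sq
  have hF : HasDerivAt F _ ν :=
    ((hP.rpow_const_mul_of_pos (hE' ν hν) (hasDerivAt_of_C1 hf) (-n / 2)).const_mul
      (c₁ / (n - 2))).congr_of_eventuallyEq (.of_forall fun y => by simp only [hFdef, mul_assoc])
  have hG : HasDerivAt G _ ν :=
    (((hasDerivAt_id' ν).rpow_const_mul_of_pos hν0
      (hP.rpow_const_mul_of_pos (hE' ν hν) (hasDerivAt_of_C1 hg) (n / 2 - 1)) (n - 2)).const_mul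
      (-(c₂ / n))).congr_of_eventuallyEq (.of_forall fun y => by simp only [hGdef, mul_assoc])
  constructor
  · rw [hF.deriv, hGdef]
    exact integratingFactor_fst hn0 hn2 hc₂ (hE' ν hν) hν0 (hode1 ν hν)
  · rw [hG.deriv, hFdef]
    exact integratingFactor_snd hn0 hn2 hc₁ (hE' ν hν) hν0 (hode2 ν hν)

/-- Integrating-factor transformation (A.9): if `(f, g)` solve the spin-`n`
current system in normal form, then
`F = (c₁/(n−2))(1−E′²)^{−n/2} f` and `G = −(c₂/n)ν^{n−2}(1−E′²)^{n/2−1} g`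
solve the symmetric system (A.11). -/
theorem stmt15 (n : ℝ) (hn0 : n ≠ 0) (hn2 : n ≠ 2)
    (c₁ c₂ : ℝ) (hc₁ : c₁ ≠ 0) (hc₂ : c₂ ≠ 0)
    (J : Set ℝ) (hJss : J ⊆ Set.Ioi (0 : ℝ)) (hJopen : IsOpen J)
    (hJconn : J.OrdConnected) (hJne : J.Nonempty)
    (E : ℝ → ℝ) (hE : ContDiffOn ℝ 2 E J)
    (hE' : ∀ ν ∈ J, 0 < 1 - (deriv E ν) ^ 2)
    (f g : ℝ → ℝ) (hf : ContDiffOn ℝ 1 f J) (hg : ContDiffOn ℝ 1 g J)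
    (hode1 : ∀ ν ∈ J,
      deriv f ν =
        n * deriv E ν * deriv (deriv E) ν / ((deriv E ν) ^ 2 - 1) * f ν
          - (n - 2) * deriv (deriv E) ν / (ν * ((deriv E ν) ^ 2 - 1)) * g ν)
    (hode2 : ∀ ν ∈ J,
      deriv g ν =
        n * ν * deriv (deriv E) ν / ((deriv E ν) ^ 2 - 1) * f ν
          - (n - 2) * ((deriv E ν) ^ 2 - 1 + ν * deriv E ν * deriv (deriv E) ν)
              / (ν * ((deriv E ν) ^ 2 - 1)) * g ν)
    (F G : ℝ → ℝ)
    (hFdef : F = fun ν =>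
      (c₁ / (n - 2)) * (1 - (deriv E ν) ^ 2) ^ (-n / 2) * f ν)
    (hGdef : G = fun ν =>
      -(c₂ / n) * ν ^ (n - 2) * (1 - (deriv E ν) ^ 2) ^ (n / 2 - 1) * g ν) :
    ∀ ν ∈ J,
      deriv F ν =
        -(c₁ / c₂) * n * ν ^ (1 - n) * deriv (deriv E) ν
          * (1 - (deriv E ν) ^ 2) ^ (-n) * G ν ∧
      deriv G ν =
        (c₂ / c₁) * (n - 2) * ν ^ (n - 1) * deriv (deriv E) ν
          * (1 - (deriv E ν) ^ 2) ^ (n - 2) * F ν :=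
  stmt15_general n hn0 hn2 c₁ c₂ hc₁ hc₂ J hJss hJopen E hE hE' f g hf hg hode1 hode2 F G hFdef
    hGdef
end
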